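/- arXiv:2405.12876 — 5 statements merged into one kernel-verified Lean document; each statement's English description precedes it below -/
import Mathlib

section
/- Let G = (V,E) be a connected graph with nonnegative edge costs and T ⊆ V nonempty. A T-rooted spanning forest F is of minimum cost if and only if for every edge e = uv ∈ E \ F: (i) if u and v lie in the same component of F, then c(e) ≥ c(e') for every edge e' on the unique u–v path in F; (ii) if u and v lie in different components of F rooted at terminals t_u and t_v respectively, then c(e) ≥ c(e') for every edge e' on the unique t_u–t_v path in F ∪ {e}. -/
def IsRootedForest {V : Type*} (G : SimpleGraph V) (T : Set V) (F : Finset (Sym2 V)) : Prop :=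
  (F : Set (Sym2 V)) ⊆ G.edgeSet ∧ (SimpleGraph.fromEdgeSet (F : Set (Sym2 V))).IsAcyclic ∧
    ∀ v : V, ∃! t : V, t ∈ T ∧ (SimpleGraph.fromEdgeSet (F : Set (Sym2 V))).Reachable v t

def forestCost {V : Type*} (c : Sym2 V → ℚ) (F : Finset (Sym2 V)) : ℚ := ∑ e ∈ F, c e

open SimpleGraph
section Aux
variable {V : Type*}

def HH (S : Finset (Sym2 V)) : SimpleGraph V := fromEdgeSet (S : Set (Sym2 V))

lemma HH_le {S S' : Finset (Sym2 V)} (h : S ⊆ S') : HH S ≤ HH S' :=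
  fromEdgeSet_mono (by exact_mod_cast h)

lemma HH_adj {S : Finset (Sym2 V)} {a b : V} : (HH S).Adj a b ↔ s(a,b) ∈ S ∧ a ≠ b := by
  simp [HH, fromEdgeSet_adj]

lemma edge_mem_of_walk {S : Finset (Sym2 V)} {x y : V} (w : (HH S).Walk x y)
    {e : Sym2 V} (he : e ∈ w.edges) : e ∈ S := by
  have := w.edges_subset_edgeSet he
  rw [HH, edgeSet_fromEdgeSet] at this
  exact_mod_cast this.1

lemma acyclic_mono {H H' : SimpleGraph V} (h : H ≤ H') (hac : H'.IsAcyclic) : H.IsAcyclic :=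
  fun _ c hc => hac (Walk.mapLe h c) (hc.mapLe h)

/-- transfer a walk between `fromEdgeSet` graphs given membership of its edges -/
def walkTransfer {S S' : Finset (Sym2 V)} {x y : V} (w : (HH S).Walk x y)
    (h : ∀ f ∈ w.edges, f ∈ S') : (HH S').Walk x y :=
  w.transfer (HH S') (by
    intro f hf
    have h1 := w.edges_subset_edgeSet hf
    rw [HH, edgeSet_fromEdgeSet] at h1 ⊢
    exact ⟨by exact_mod_cast h f hf, h1.2⟩)

@[simp] lemma walkTransfer_edges {S S' : Finset (Sym2 V)} {x y : V} (w : (HH S).Walk x y)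
    (h : ∀ f ∈ w.edges, f ∈ S') : (walkTransfer w h).edges = w.edges :=
  Walk.edges_transfer _ _

lemma reach_of_walk_subset {S S' : Finset (Sym2 V)} {x y : V} (w : (HH S).Walk x y)
    (h : ∀ f ∈ w.edges, f ∈ S') : (HH S').Reachable x y := ⟨walkTransfer w h⟩

variable [DecidableEq V] [DecidableEq (Sym2 V)]

/-- adding an edge between non-connected vertices of an acyclic graph keeps it acyclic -/
lemma acyclic_insert {S : Finset (Sym2 V)} (hac : (HH S).IsAcyclic) {a b : V} (hab : a ≠ b)
    (hr : ¬ (HH S).Reachable a b) : (HH (insert s(a,b) S)).IsAcyclic := by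
  intro u cyc hcyc
  by_cases hm : s(a,b) ∈ cyc.edges
  · have hadj : (HH (insert s(a,b) S)).Adj a b := HH_adj.mpr ⟨Finset.mem_insert_self _ _, hab⟩
    have := (adj_and_reachable_delete_edges_iff_exists_cycle
      (G := HH (insert s(a,b) S))).mpr ⟨u, cyc, hcyc, hm⟩
    refine hr (this.2.mono ?_)
    intro x y hxy
    rw [deleteEdges_adj] at hxy
    obtain ⟨hxy1, hxy2⟩ := hxy
    rw [HH_adj] at hxy1 ⊢
    rcases Finset.mem_insert.mp hxy1.1 with heq | hmem
    · exact absurd (Set.mem_singleton_iff.mpr heq) hxy2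
    · exact ⟨hmem, hxy1.2⟩
  · refine hac (walkTransfer cyc ?_) (hcyc.transfer _)
    intro f hf
    rcases Finset.mem_insert.mp (edge_mem_of_walk cyc hf) with rfl | hmem
    · exact absurd hf hm
    · exact hmem

variable (T : Set V)

def TCon (S : Finset (Sym2 V)) (a b : V) : Prop :=
  (HH S).Reachable a b ∨
    ((∃ t ∈ T, (HH S).Reachable a t) ∧ (∃ t ∈ T, (HH S).Reachable b t))

variable {T}

lemma TCon.refl (S : Finset (Sym2 V)) (a : V) : TCon T S a a := Or.inl (Reachable.refl a)

lemma TCon.symm {S : Finset (Sym2 V)} {a b : V} (h : TCon T S a b) : TCon T S b a := by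
  rcases h with h | ⟨h1, h2⟩
  · exact Or.inl h.symm
  · exact Or.inr ⟨h2, h1⟩

lemma TCon.trans {S : Finset (Sym2 V)} {a b d : V} (h : TCon T S a b) (h' : TCon T S b d) :
    TCon T S a d := by
  rcases h with h | ⟨h1, h2⟩ <;> rcases h' with h' | ⟨h1', h2'⟩
  · exact Or.inl (h.trans h')
  · exact Or.inr ⟨h1'.imp (fun t ht => ⟨ht.1, h.trans ht.2⟩), h2'⟩
  · exact Or.inr ⟨h1, h2.imp (fun t ht => ⟨ht.1, h'.symm.trans ht.2⟩)⟩
  · exact Or.inr ⟨h1, h2'⟩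

lemma TCon.mono {S S' : Finset (Sym2 V)} (hss : S ⊆ S') {a b : V} (h : TCon T S a b) :
    TCon T S' a b := by
  rcases h with h | ⟨⟨t, ht, hr⟩, ⟨t', ht', hr'⟩⟩
  · exact Or.inl (h.mono (HH_le hss))
  · exact Or.inr ⟨⟨t, ht, hr.mono (HH_le hss)⟩, ⟨t', ht', hr'.mono (HH_le hss)⟩⟩

lemma TCon.of_terminals {S : Finset (Sym2 V)} {t t' : V} (ht : t ∈ T) (ht' : t' ∈ T) :
    TCon T S t t' := Or.inr ⟨⟨t, ht, Reachable.refl t⟩, ⟨t', ht', Reachable.refl t'⟩⟩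

lemma TCon.of_reachable {S : Finset (Sym2 V)} {a b : V} (h : (HH S).Reachable a b) :
    TCon T S a b := Or.inl h

/-- TCon is transitive along a walk all of whose edges have TCon endpoints. -/
lemma TCon.of_walk {S : Finset (Sym2 V)} {H : SimpleGraph V} {x y : V} (w : H.Walk x y)
    (hw : ∀ a b : V, s(a,b) ∈ w.edges → TCon T S a b) : TCon T S x y := by
  induction w with
  | nil => exact TCon.refl S _
  | @cons x z y h p ih =>
    refine (hw x z (by simp)).trans (ih fun a b hab => hw a b ?_)
    rw [SimpleGraph.Walk.edges_cons]
    exact List.mem_cons_of_mem _ hab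


/-- Split a duplicate-free walk at an edge. -/
lemma split_at_edge {G : SimpleGraph V} {x y a b : V} (w : G.Walk x y)
    (hnd : w.edges.Nodup) (he : s(a,b) ∈ w.edges) :
    (∃ (w₁ : G.Walk x a) (w₂ : G.Walk b y),
      s(a,b) ∉ w₁.edges ∧ s(a,b) ∉ w₂.edges ∧ w₁.edges ⊆ w.edges ∧ w₂.edges ⊆ w.edges ∧
      w₁.edges.Nodup ∧ w₂.edges.Nodup ∧
      (∀ f ∈ w.edges, f = s(a,b) ∨ f ∈ w₁.edges ∨ f ∈ w₂.edges)) ∨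
    (∃ (w₁ : G.Walk x b) (w₂ : G.Walk a y),
      s(a,b) ∉ w₁.edges ∧ s(a,b) ∉ w₂.edges ∧ w₁.edges ⊆ w.edges ∧ w₂.edges ⊆ w.edges ∧
      w₁.edges.Nodup ∧ w₂.edges.Nodup ∧
      (∀ f ∈ w.edges, f = s(a,b) ∨ f ∈ w₁.edges ∨ f ∈ w₂.edges)) := by
  induction w with
  | nil => simp at he
  | @cons x z y h p ih =>
    rw [SimpleGraph.Walk.edges_cons] at he hnd
    have hnin : s(x,z) ∉ p.edges := (List.nodup_cons.mp hnd).1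
    have hndp : p.edges.Nodup := (List.nodup_cons.mp hnd).2
    rcases List.mem_cons.mp he with heq | htl
    · rcases Sym2.eq_iff.mp heq with ⟨rfl, rfl⟩ | ⟨rfl, rfl⟩
      · refine Or.inl ⟨SimpleGraph.Walk.nil, p, by simp, hnin,
          by simp, fun e hh => List.mem_cons_of_mem _ hh, by simp, hndp, ?_⟩
        intro f hf
        rcases List.mem_cons.mp hf with rfl | hf
        · exact Or.inl rfl
        · exact Or.inr (Or.inr hf)
      · refine Or.inr ⟨SimpleGraph.Walk.nil, p, by simp, by rw [heq]; exact hnin,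
          by simp, fun e hh => List.mem_cons_of_mem _ hh, by simp, hndp, ?_⟩
        intro f hf
        rcases List.mem_cons.mp hf with rfl | hf
        · exact Or.inl heq.symm
        · exact Or.inr (Or.inr hf)
    · have hne : s(a,b) ≠ s(x,z) := fun hq => hnin (hq ▸ htl)
      rcases ih hndp htl with ⟨w₁, w₂, h1, h2, h3, h4, h5, h6, h7⟩ |
        ⟨w₁, w₂, h1, h2, h3, h4, h5, h6, h7⟩
      · refine Or.inl ⟨SimpleGraph.Walk.cons h w₁, w₂, ?_, h2, ?_,
          fun e hh => List.mem_cons_of_mem _ (h4 hh), ?_, h6, ?_⟩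
        · rw [SimpleGraph.Walk.edges_cons]
          exact fun hq => (List.mem_cons.mp hq).elim hne h1
        · rw [SimpleGraph.Walk.edges_cons]
          intro e hh
          rcases List.mem_cons.mp hh with rfl | hh
          · exact List.mem_cons_self
          · exact List.mem_cons_of_mem _ (h3 hh)
        · rw [SimpleGraph.Walk.edges_cons]
          exact List.nodup_cons.mpr ⟨fun hq => hnin (h3 hq), h5⟩
        · rw [SimpleGraph.Walk.edges_cons]
          intro f hf
          rcases List.mem_cons.mp hf with rfl | hf
          · exact Or.inr (Or.inl (List.mem_cons_self))
          · rcases h7 f hf with h | h | h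
            · exact Or.inl h
            · exact Or.inr (Or.inl (List.mem_cons_of_mem _ h))
            · exact Or.inr (Or.inr h)
      · refine Or.inr ⟨SimpleGraph.Walk.cons h w₁, w₂, ?_, h2, ?_,
          fun e hh => List.mem_cons_of_mem _ (h4 hh), ?_, h6, ?_⟩
        · rw [SimpleGraph.Walk.edges_cons]
          exact fun hq => (List.mem_cons.mp hq).elim hne h1
        · rw [SimpleGraph.Walk.edges_cons]
          intro e hh
          rcases List.mem_cons.mp hh with rfl | hh
          · exact List.mem_cons_self
          · exact List.mem_cons_of_mem _ (h3 hh)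
        · rw [SimpleGraph.Walk.edges_cons]
          exact List.nodup_cons.mpr ⟨fun hq => hnin (h3 hq), h5⟩
        · rw [SimpleGraph.Walk.edges_cons]
          intro f hf
          rcases List.mem_cons.mp hf with rfl | hf
          · exact Or.inr (Or.inl (List.mem_cons_self))
          · rcases h7 f hf with h | h | h
            · exact Or.inl h
            · exact Or.inr (Or.inl (List.mem_cons_of_mem _ h))
            · exact Or.inr (Or.inr h)

lemma reach_split {S : Finset (Sym2 V)} {x y u w : V}
    (h : (HH S).Reachable u w) :
    (HH (S.erase s(x,y))).Reachable u w ∨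
    ((HH (S.erase s(x,y))).Reachable u x ∧ (HH (S.erase s(x,y))).Reachable y w) ∨
    ((HH (S.erase s(x,y))).Reachable u y ∧ (HH (S.erase s(x,y))).Reachable x w) := by
  obtain ⟨w0⟩ := h
  have key : ∀ {p q : V} (wseg : (HH S).Walk p q), s(x,y) ∉ wseg.edges →
      (HH (S.erase s(x,y))).Reachable p q := by
    intro p q wseg hns
    refine reach_of_walk_subset wseg ?_
    intro f hf
    exact Finset.mem_erase.mpr ⟨fun hq => hns (hq ▸ hf), edge_mem_of_walk _ hf⟩
  have hnd : w0.bypass.edges.Nodup := w0.bypass_isPath.edges_nodup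
  by_cases hm : s(x,y) ∈ w0.bypass.edges
  · rcases split_at_edge w0.bypass hnd hm with ⟨w₁, w₂, h1, h2, -⟩ | ⟨w₁, w₂, h1, h2, -⟩
    · exact Or.inr (Or.inl ⟨key w₁ h1, key w₂ h2⟩)
    · exact Or.inr (Or.inr ⟨key w₁ h1, key w₂ h2⟩)
  · exact Or.inl (key w0.bypass hm)

lemma rooted_unique_terminal {G : SimpleGraph V} {F : Finset (Sym2 V)}
    (hF : IsRootedForest G T F) {v t t' : V} (ht : t ∈ T) (ht' : t' ∈ T)
    (h1 : (HH F).Reachable v t) (h2 : (HH F).Reachable v t') : t = t' := by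
  obtain ⟨t'', -, hun⟩ := hF.2.2 v
  exact (hun t ⟨ht, h1⟩).trans (hun t' ⟨ht', h2⟩).symm

/-- K2: the fundamental non-connection property of a rooted forest at one of its edges. -/
lemma not_TCon_erase {G : SimpleGraph V} {F : Finset (Sym2 V)}
    (hF : IsRootedForest G T F) {u v : V} (he : s(u,v) ∈ F) :
    ¬ TCon T (F.erase s(u,v)) u v := by
  have hGe : s(u,v) ∈ G.edgeSet := hF.1 (by exact_mod_cast he)
  have huv : G.Adj u v := hGe
  have hne : u ≠ v := huv.ne
  have hadjF : (HH F).Adj u v := HH_adj.mpr ⟨he, hne⟩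
  have hbridge : ¬ (HH F \ fromEdgeSet {s(u,v)}).Reachable u v := by
    have hac : (HH F).IsAcyclic := hF.2.1
    rw [isAcyclic_iff_forall_edge_isBridge] at hac
    exact (isBridge_iff.mp (hac ((SimpleGraph.mem_edgeSet _).mpr hadjF)))
  have hler : HH (F.erase s(u,v)) ≤ HH F \ fromEdgeSet {s(u,v)} := by
    intro x y hxy
    rw [HH_adj] at hxy
    obtain ⟨hm, hxyne⟩ := hxy
    rw [sdiff_adj, fromEdgeSet_adj]
    exact ⟨HH_adj.mpr ⟨Finset.mem_of_mem_erase hm, hxyne⟩,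
      fun hc => (Finset.mem_erase.mp hm).1 (by simpa using hc.1)⟩
  have hnr : ¬ (HH (F.erase s(u,v))).Reachable u v := fun h => hbridge (h.mono hler)
  rintro (h | ⟨⟨t, ht, hu⟩, ⟨t', ht', hv⟩⟩)
  · exact hnr h
  · have h1 : (HH F).Reachable u t := hu.mono (HH_le (Finset.erase_subset _ _))
    have h2 : (HH F).Reachable u t' :=
      (hadjF.reachable).trans (hv.mono (HH_le (Finset.erase_subset _ _)))
    have : t = t' := rooted_unique_terminal hF ht ht' h1 h2
    subst this
    exact hnr (hu.trans hv.symm)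

/-- K4': exchanging an edge of a rooted forest for a `G`-edge whose endpoints are not
`T`-connected after the removal yields a rooted forest. -/
lemma swap_rooted {G : SimpleGraph V} {F' : Finset (Sym2 V)}
    (hF' : IsRootedForest G T F') {e : Sym2 V} (he : e ∈ F')
    {a b : V} (hab : G.Adj a b) (hcon : ¬ TCon T (F'.erase e) a b) :
    IsRootedForest G T (insert s(a,b) (F'.erase e)) := by
  revert he hcon
  induction e using Sym2.ind with
  | _ x y =>
  intro he hcon
  set E := F'.erase s(x,y) with hE
  have hroot : ∀ v, ∃ t ∈ T, (HH F').Reachable v t := by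
    intro v
    obtain ⟨t, ⟨ht, hr⟩, -⟩ := hF'.2.2 v
    exact ⟨t, ht, hr⟩
  have claimB : ∀ v, (∃ t ∈ T, (HH E).Reachable v t) ∨
      ((HH E).Reachable v x ∨ (HH E).Reachable v y) := by
    intro v
    obtain ⟨t, ht, hr⟩ := hroot v
    rcases reach_split (x := x) (y := y) hr with h | ⟨h1, h2⟩ | ⟨h1, h2⟩
    · exact Or.inl ⟨t, ht, h⟩
    · exact Or.inr (Or.inl h1)
    · exact Or.inr (Or.inr h1)
  have claimGood : ¬ ((¬ ∃ t ∈ T, (HH E).Reachable x t) ∧ (¬ ∃ t ∈ T, (HH E).Reachable y t)) := by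
    rintro ⟨hx, hy⟩
    obtain ⟨t, ht, hr⟩ := hroot x
    rcases reach_split (x := x) (y := y) hr with h | ⟨h1, h2⟩ | ⟨h1, h2⟩
    · exact hx ⟨t, ht, h⟩
    · exact hy ⟨t, ht, h2⟩
    · exact hx ⟨t, ht, h2⟩
  have claimC : ∀ v, (¬ ∃ t ∈ T, (HH E).Reachable v t) →
      ((HH E).Reachable v x ∧ ¬ ∃ t ∈ T, (HH E).Reachable x t) ∨
      ((HH E).Reachable v y ∧ ¬ ∃ t ∈ T, (HH E).Reachable y t) := by
    intro v hv
    rcases claimB v with h | h1 | h1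
    · exact absurd h hv
    · exact Or.inl ⟨h1, fun ⟨t, ht, hr⟩ => hv ⟨t, ht, h1.trans hr⟩⟩
    · exact Or.inr ⟨h1, fun ⟨t, ht, hr⟩ => hv ⟨t, ht, h1.trans hr⟩⟩
  have badReach : ∀ v w, (¬ ∃ t ∈ T, (HH E).Reachable v t) →
      (¬ ∃ t ∈ T, (HH E).Reachable w t) → (HH E).Reachable v w := by
    intro v w hv hw
    rcases claimC v hv with ⟨h1, h2⟩ | ⟨h1, h2⟩ <;> rcases claimC w hw with ⟨h3, h4⟩ | ⟨h3, h4⟩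
    · exact h1.trans h3.symm
    · exact absurd ⟨h2, h4⟩ claimGood
    · exact absurd ⟨h4, h2⟩ claimGood
    · exact h1.trans h3.symm
  have hnr : ¬ (HH E).Reachable a b := fun h => hcon (Or.inl h)
  have hb2 : (¬ ∃ t ∈ T, (HH E).Reachable a t) ∨ (¬ ∃ t ∈ T, (HH E).Reachable b t) := by
    by_contra hq
    push_neg at hq
    obtain ⟨h1, h2⟩ := hq
    exact hcon (Or.inr ⟨h1, h2⟩)
  have main : ∀ p q : V, G.Adj p q → ¬ (HH E).Reachable p q →
      (¬ ∃ t ∈ T, (HH E).Reachable p t) → (∃ t ∈ T, (HH E).Reachable q t) →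
      IsRootedForest G T (insert s(p,q) E) := by
    intro p q hpq hnr' hBp hGq
    have hadjI : (HH (insert s(p,q) E)).Adj p q :=
      HH_adj.mpr ⟨Finset.mem_insert_self _ _, hpq.ne⟩
    refine ⟨?_, ?_, ?_⟩
    · intro f hf
      rcases Finset.mem_insert.mp (by exact_mod_cast hf) with rfl | hfm
      · exact hpq
      · exact hF'.1 (by exact_mod_cast Finset.mem_of_mem_erase hfm)
    · exact acyclic_insert (acyclic_mono (HH_le (Finset.erase_subset _ _)) hF'.2.1)
        hpq.ne hnr'
    · have hsep : ∀ t t', t ∈ T → t' ∈ T →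
          (HH (insert s(p,q) E)).Reachable t t' → t = t' := by
        intro t t' ht ht' hr
        obtain ⟨w0⟩ := hr
        have hedges : ∀ {c d : V} (wseg : (HH (insert s(p,q) E)).Walk c d),
            s(p,q) ∉ wseg.edges → (HH E).Reachable c d := by
          intro c d wseg hns
          refine reach_of_walk_subset wseg ?_
          intro f hf
          rcases Finset.mem_insert.mp (edge_mem_of_walk _ hf) with rfl | hfm
          · exact absurd hf hns
          · exact hfm
        by_cases hm : s(p,q) ∈ w0.bypass.edges
        · rcases split_at_edge w0.bypass w0.bypass_isPath.edges_nodup hm with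
            ⟨w₁, w₂, h1, h2, -⟩ | ⟨w₁, w₂, h1, h2, -⟩
          · exact absurd ⟨t, ht, (hedges w₁ h1).symm⟩ hBp
          · exact absurd ⟨t', ht', hedges w₂ h2⟩ hBp
        · have h2 : (HH F').Reachable t t' :=
            (hedges w0.bypass hm).mono (HH_le (Finset.erase_subset _ _))
          exact rooted_unique_terminal hF' ht ht' (Reachable.refl t) h2
      have hex : ∀ v, ∃ t ∈ T, (HH (insert s(p,q) E)).Reachable v t := by
        intro v
        obtain ⟨t, ht, hqt⟩ := hGq
        by_cases hBv : ∃ t ∈ T, (HH E).Reachable v t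
        · obtain ⟨t', ht', hr⟩ := hBv
          exact ⟨t', ht', hr.mono (HH_le (Finset.subset_insert _ _))⟩
        · have hrvp : (HH E).Reachable v p := badReach v p hBv hBp
          exact ⟨t, ht, ((hrvp.mono (HH_le (Finset.subset_insert _ _))).trans
            hadjI.reachable).trans (hqt.mono (HH_le (Finset.subset_insert _ _)))⟩
      intro v
      obtain ⟨t, ht, hr⟩ := hex v
      exact ⟨t, ⟨ht, hr⟩, fun t' ⟨ht', hr'⟩ => hsep t' t ht' ht (hr'.symm.trans hr)⟩
  rcases hb2 with hBa | hBb
  · have hGb : ∃ t ∈ T, (HH E).Reachable b t := by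
      by_contra hBb
      exact hnr (badReach a b hBa hBb)
    exact main a b hab hnr hBa hGb
  · have hGa : ∃ t ∈ T, (HH E).Reachable a t := by
      by_contra hBa
      exact hnr (badReach a b hBa hBb)
    have := main b a hab.symm (fun h => hnr h.symm) hBb hGa
    rwa [Sym2.eq_swap] at this


lemma cost_swap (c : Sym2 V → ℚ) {B : Finset (Sym2 V)} {e f : Sym2 V} (he : e ∈ B)
    (hf : f ∉ B.erase e) :
    forestCost c (insert f (B.erase e)) = forestCost c B - c e + c f := by
  unfold forestCost
  rw [Finset.sum_insert hf, ← Finset.add_sum_erase _ _ he]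
  ring

lemma forward {G : SimpleGraph V} {c : Sym2 V → ℚ} {F : Finset (Sym2 V)}
    (hF : IsRootedForest G T F)
    (hmin : ∀ F', IsRootedForest G T F' → forestCost c F ≤ forestCost c F')
    {u v : V} (huv : G.Adj u v) (hnm : s(u, v) ∉ F) {a b : V}
    (hfF : s(a,b) ∈ F) (hUV : ¬ TCon T (F.erase s(a,b)) u v) :
    c s(a,b) ≤ c s(u,v) := by
  have hrooted : IsRootedForest G T (insert s(u,v) (F.erase s(a,b))) :=
    swap_rooted hF hfF huv hUV
  have hnm' : s(u,v) ∉ F.erase s(a,b) := fun h => hnm (Finset.mem_of_mem_erase h)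
  have hcost := cost_swap c hfF hnm'
  have := hmin _ hrooted
  rw [hcost] at this
  linarith

lemma mem_edgeSet_HH {S : Finset (Sym2 V)} {f : Sym2 V} :
    f ∈ (HH S).edgeSet ↔ f ∈ S ∧ ¬ f.IsDiag := by
  rw [HH, edgeSet_fromEdgeSet]
  simp

lemma min_imp_local {G : SimpleGraph V} {c : Sym2 V → ℚ} {F : Finset (Sym2 V)}
    (hF : IsRootedForest G T F)
    (hmin : ∀ F', IsRootedForest G T F' → forestCost c F ≤ forestCost c F')
    {u v : V} (huv : G.Adj u v) (hnm : s(u, v) ∉ F) :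
    (((HH F).Reachable u v →
        ∀ p : (HH F).Walk u v, p.IsPath → ∀ e' ∈ p.edges, c e' ≤ c s(u, v)) ∧
      (¬ (HH F).Reachable u v →
        ∀ tu tv : V, tu ∈ T → tv ∈ T → (HH F).Reachable u tu → (HH F).Reachable v tv →
          ∀ p : (SimpleGraph.fromEdgeSet (insert s(u, v) (F : Set (Sym2 V)))).Walk tu tv,
            p.IsPath → ∀ e' ∈ p.edges, c e' ≤ c s(u, v))) := by
  constructor
  · intro hreach p hp e' he'
    revert he'
    induction e' using Sym2.ind with
    | _ a b =>
    intro he'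
    have hfF : s(a,b) ∈ F := edge_mem_of_walk p he'
    refine forward hF hmin huv hnm hfF ?_
    intro hT
    have hK2 := not_TCon_erase hF hfF
    rcases split_at_edge p hp.edges_nodup he' with
      ⟨w₁, w₂, h1, h2, h3, h4, -⟩ | ⟨w₁, w₂, h1, h2, h3, h4, -⟩
    · have R1 : (HH (F.erase s(a,b))).Reachable u a := reach_of_walk_subset w₁
        (fun f hf => Finset.mem_erase.mpr ⟨fun hq => h1 (hq ▸ hf), edge_mem_of_walk p (h3 hf)⟩)
      have R2 : (HH (F.erase s(a,b))).Reachable b v := reach_of_walk_subset w₂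
        (fun f hf => Finset.mem_erase.mpr ⟨fun hq => h2 (hq ▸ hf), edge_mem_of_walk p (h4 hf)⟩)
      exact hK2 (((TCon.of_reachable R1.symm).trans hT).trans (TCon.of_reachable R2.symm))
    · have R1 : (HH (F.erase s(a,b))).Reachable u b := reach_of_walk_subset w₁
        (fun f hf => Finset.mem_erase.mpr ⟨fun hq => h1 (hq ▸ hf), edge_mem_of_walk p (h3 hf)⟩)
      have R2 : (HH (F.erase s(a,b))).Reachable a v := reach_of_walk_subset w₂
        (fun f hf => Finset.mem_erase.mpr ⟨fun hq => h2 (hq ▸ hf), edge_mem_of_walk p (h4 hf)⟩)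
      exact hK2 ((TCon.of_reachable R2).trans (hT.symm.trans (TCon.of_reachable R1)))
  · intro hnreach tu tv htu htv hru hrv p hp e' he'
    revert he'
    induction e' using Sym2.ind with
    | _ a b =>
    intro he'
    by_cases hES : s(a,b) = s(u,v)
    · rw [hES]
    have hqedge : ∀ f ∈ p.edges, f ∈ (HH (insert s(u,v) F)).edgeSet := by
      intro f hf
      have h0 := p.edges_subset_edgeSet hf
      rw [edgeSet_fromEdgeSet, Set.mem_diff] at h0
      refine mem_edgeSet_HH.mpr ⟨?_, h0.2⟩
      rcases Set.mem_insert_iff.mp h0.1 with h | h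
      · exact h ▸ Finset.mem_insert_self _ _
      · exact Finset.mem_insert_of_mem (by exact_mod_cast h)
    set q : (HH (insert s(u,v) F)).Walk tu tv := p.transfer _ hqedge with hqdef
    have hqP : q.IsPath := hp.transfer _
    have hqe : q.edges = p.edges := Walk.edges_transfer _ _
    have heq' : s(a,b) ∈ q.edges := by rw [hqe]; exact he'
    have hfF : s(a,b) ∈ F :=
      (Finset.mem_insert.mp (edge_mem_of_walk q heq')).resolve_left hES
    refine forward hF hmin huv hnm hfF ?_
    intro hT
    have hK2 := not_TCon_erase hF hfF
    rcases hT with hR | ⟨⟨t, ht, hut⟩, ⟨t', ht', hvt⟩⟩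
    · exact hnreach (hR.mono (HH_le (Finset.erase_subset _ _)))
    · have hteq : t = tu := rooted_unique_terminal hF ht htu
        (hut.mono (HH_le (Finset.erase_subset _ _))) hru
      have hteq' : t' = tv := rooted_unique_terminal hF ht' htv
        (hvt.mono (HH_le (Finset.erase_subset _ _))) hrv
      rw [hteq] at hut
      rw [hteq'] at hvt
      have hsuv : s(u,v) ∈ q.edges := by
        by_contra hsm
        have : (HH F).Reachable tu tv := reach_of_walk_subset q
          (fun f hf => (Finset.mem_insert.mp (edge_mem_of_walk q hf)).resolve_left
            (fun h => hsm (h ▸ hf)))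
        exact hnreach ((hru.trans this).trans hrv.symm)
      rcases split_at_edge q hqP.edges_nodup hsuv with
        ⟨q₁, q₂, hA1, hA2, hS1, hS2, hN1, hN2, hCov⟩ | ⟨q₁, q₂, hA1, hA2, hS1, hS2, -⟩
      · have hq₁F : ∀ f ∈ q₁.edges, f ∈ F := fun f hf =>
          (Finset.mem_insert.mp (edge_mem_of_walk q (hS1 hf))).resolve_left
            (fun h => hA1 (h ▸ hf))
        have hq₂F : ∀ f ∈ q₂.edges, f ∈ F := fun f hf =>
          (Finset.mem_insert.mp (edge_mem_of_walk q (hS2 hf))).resolve_left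
            (fun h => hA2 (h ▸ hf))
        rcases (hCov s(a,b) heq').resolve_left hES with hmem | hmem
        · -- s(a,b) lies on the tu→u part
          set W := walkTransfer q₁ hq₁F with hWdef
          have hWe : W.edges = q₁.edges := walkTransfer_edges _ _
          have hmemW : s(a,b) ∈ W.edges := by rw [hWe]; exact hmem
          have hWnd : W.edges.Nodup := by rw [hWe]; exact hN1
          have hkey : ∀ {x y : V} (r : (HH F).Walk x y), s(a,b) ∉ r.edges →
              r.edges ⊆ W.edges → (HH (F.erase s(a,b))).Reachable x y := by
            intro x y r hr1 hr2
            refine reach_of_walk_subset r (fun f hf => Finset.mem_erase.mpr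
              ⟨fun hq0 => hr1 (hq0 ▸ hf), hq₁F f (by rw [← hWe]; exact hr2 hf)⟩)
          rcases split_at_edge W hWnd hmemW with
            ⟨r₁, r₂, g1, g2, g3, g4, -⟩ | ⟨r₁, r₂, g1, g2, g3, g4, -⟩
          · -- r₁ : tu→a, r₂ : b→u
            exact hK2 (TCon.of_reachable ((hkey r₁ g1 g3).symm.trans
              (hut.symm.trans (hkey r₂ g2 g4).symm)))
          · -- r₁ : tu→b, r₂ : a→u
            exact hK2 (TCon.of_reachable ((hkey r₂ g2 g4).trans
              (hut.trans (hkey r₁ g1 g3))))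
        · -- s(a,b) lies on the v→tv part
          set W := walkTransfer q₂ hq₂F with hWdef
          have hWe : W.edges = q₂.edges := walkTransfer_edges _ _
          have hmemW : s(a,b) ∈ W.edges := by rw [hWe]; exact hmem
          have hWnd : W.edges.Nodup := by rw [hWe]; exact hN2
          have hkey : ∀ {x y : V} (r : (HH F).Walk x y), s(a,b) ∉ r.edges →
              r.edges ⊆ W.edges → (HH (F.erase s(a,b))).Reachable x y := by
            intro x y r hr1 hr2
            refine reach_of_walk_subset r (fun f hf => Finset.mem_erase.mpr
              ⟨fun hq0 => hr1 (hq0 ▸ hf), hq₂F f (by rw [← hWe]; exact hr2 hf)⟩)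
          rcases split_at_edge W hWnd hmemW with
            ⟨r₁, r₂, g1, g2, g3, g4, -⟩ | ⟨r₁, r₂, g1, g2, g3, g4, -⟩
          · -- r₁ : v→a, r₂ : b→tv
            exact hK2 (TCon.of_reachable ((hkey r₁ g1 g3).symm.trans
              (hvt.trans (hkey r₂ g2 g4).symm)))
          · -- r₁ : v→b, r₂ : a→tv
            exact hK2 (TCon.of_reachable ((hkey r₂ g2 g4).trans
              (hvt.symm.trans (hkey r₁ g1 g3))))
      · -- impossible branch: q₁ : tu → v inside F
        have hq₁F : ∀ f ∈ q₁.edges, f ∈ F := fun f hf =>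
          (Finset.mem_insert.mp (edge_mem_of_walk q (hS1 hf))).resolve_left
            (fun h => hA1 (h ▸ hf))
        exact hnreach (hru.trans (reach_of_walk_subset q₁ hq₁F))

lemma local_imp_min {G : SimpleGraph V} {c : Sym2 V → ℚ} {F : Finset (Sym2 V)}
    (hF : IsRootedForest G T F)
    (hloc : ∀ u v : V, G.Adj u v → s(u, v) ∉ F →
      (((HH F).Reachable u v →
          ∀ p : (HH F).Walk u v, p.IsPath → ∀ e' ∈ p.edges, c e' ≤ c s(u, v)) ∧
        (¬ (HH F).Reachable u v →
          ∀ tu tv : V, tu ∈ T → tv ∈ T → (HH F).Reachable u tu → (HH F).Reachable v tv →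
            ∀ p : (SimpleGraph.fromEdgeSet (insert s(u, v) (F : Set (Sym2 V)))).Walk tu tv,
              p.IsPath → ∀ e' ∈ p.edges, c e' ≤ c s(u, v)))) :
    ∀ F', IsRootedForest G T F' → forestCost c F ≤ forestCost c F' := by
  -- if a rooted forest is contained in F, it equals F
  have heq : ∀ B : Finset (Sym2 V), IsRootedForest G T B → B ⊆ F →
      forestCost c F ≤ forestCost c B := by
    intro B hB hsub
    have hFB : F ⊆ B := by
      intro e heF
      by_contra heB
      revert heF heB
      induction e using Sym2.ind with
      | _ x y =>
      intro heF heB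
      have hBsub : B ⊆ F.erase s(x,y) := fun f hf =>
        Finset.mem_erase.mpr ⟨fun h => heB (h ▸ hf), hsub hf⟩
      obtain ⟨t, ⟨ht, hxt⟩, -⟩ := hB.2.2 x
      obtain ⟨t', ⟨ht', hyt⟩, -⟩ := hB.2.2 y
      have hx : (HH (F.erase s(x,y))).Reachable x t :=
        Reachable.mono (HH_le hBsub) hxt
      have hy : (HH (F.erase s(x,y))).Reachable y t' :=
        Reachable.mono (HH_le hBsub) hyt
      exact not_TCon_erase hF heF (Or.inr ⟨⟨t, ht, hx⟩, ⟨t', ht', hy⟩⟩)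
    have : B = F := Finset.Subset.antisymm hsub hFB
    rw [this]
  have key : ∀ n (B : Finset (Sym2 V)), IsRootedForest G T B → (B \ F).card ≤ n →
      forestCost c F ≤ forestCost c B := by
    intro n
    induction n with
    | zero =>
      intro B hB hcard
      exact heq B hB (Finset.sdiff_eq_empty_iff_subset.mp (Finset.card_eq_zero.mp
        (Nat.le_zero.mp hcard)))
    | succ n ih =>
      intro B hB hcard
      by_cases hsub : B ⊆ F
      · exact heq B hB hsub
      obtain ⟨e, heB, heF⟩ := Finset.not_subset.mp hsub
      revert heB heF
      induction e using Sym2.ind with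
      | _ u v =>
      intro heB heF
      have huv : G.Adj u v := hB.1 (by exact_mod_cast heB)
      have hK2 : ¬ TCon T (B.erase s(u,v)) u v := not_TCon_erase hB heB
      obtain ⟨a, b, hfF, hfc, hncon⟩ : ∃ a b, s(a,b) ∈ F ∧ c s(a,b) ≤ c s(u,v) ∧
          ¬ TCon T (B.erase s(u,v)) a b := by
        by_cases hr : (HH F).Reachable u v
        · obtain ⟨w0⟩ := hr
          have hclaim : ∃ a b, s(a,b) ∈ w0.bypass.edges ∧ ¬ TCon T (B.erase s(u,v)) a b := by
            by_contra hall
            push_neg at hall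
            exact hK2 (TCon.of_walk w0.bypass hall)
          obtain ⟨a, b, hmem, hncon⟩ := hclaim
          exact ⟨a, b, edge_mem_of_walk _ hmem,
            (hloc u v huv heF).1 ⟨w0⟩ w0.bypass w0.bypass_isPath s(a,b) hmem, hncon⟩
        · obtain ⟨tu, ⟨htu, hrutu⟩, -⟩ := hF.2.2 u
          obtain ⟨tv, ⟨htv, hrvtv⟩, -⟩ := hF.2.2 v
          have hle : HH F ≤ HH (insert s(u,v) F) := HH_le (Finset.subset_insert _ _)
          obtain ⟨w1⟩ := hrutu
          obtain ⟨w2⟩ := hrvtv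
          have hadj : (HH (insert s(u,v) F)).Adj u v :=
            HH_adj.mpr ⟨Finset.mem_insert_self _ _, huv.ne⟩
          set W : (HH (insert s(u,v) F)).Walk tu tv :=
            (Walk.mapLe hle w1).reverse.append (Walk.cons hadj (Walk.mapLe hle w2)) with hW
          set q := W.bypass with hq
          have hqP : q.IsPath := W.bypass_isPath
          have huvq : s(u,v) ∈ q.edges := by
            by_contra hsm
            have : (HH F).Reachable tu tv := reach_of_walk_subset q
              (fun f hf => (Finset.mem_insert.mp (edge_mem_of_walk q hf)).resolve_left
                (fun h => hsm (h ▸ hf)))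
            exact hr ((Reachable.trans ⟨w1⟩ this).trans (Reachable.symm ⟨w2⟩))
          rcases split_at_edge q hqP.edges_nodup huvq with
            ⟨q₁, q₂, hA1, hA2, hS1, hS2, -, -, -⟩ | ⟨q₁, q₂, hA1, hA2, hS1, hS2, -, -, -⟩
          · have hclaim : ∃ a b, s(a,b) ∈ q.edges ∧ s(a,b) ≠ s(u,v) ∧
                ¬ TCon T (B.erase s(u,v)) a b := by
              by_contra hall
              push_neg at hall
              have T1 : TCon T (B.erase s(u,v)) tu u := TCon.of_walk q₁
                (fun a b hab => hall a b (hS1 hab) (fun h => hA1 (by rw [h] at hab; exact hab)))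
              have T2 : TCon T (B.erase s(u,v)) v tv := TCon.of_walk q₂
                (fun a b hab => hall a b (hS2 hab) (fun h => hA2 (by rw [h] at hab; exact hab)))
              exact hK2 (T1.symm.trans ((TCon.of_terminals htu htv).trans T2.symm))
            obtain ⟨a, b, hmem, hneq, hncon⟩ := hclaim
            have hfF : s(a,b) ∈ F :=
              (Finset.mem_insert.mp (edge_mem_of_walk q hmem)).resolve_left hneq
            -- transfer q to the Set-insert graph to apply hloc
            have hqedge : ∀ f ∈ q.edges,
                f ∈ (SimpleGraph.fromEdgeSet (insert s(u, v) (F : Set (Sym2 V)))).edgeSet := by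
              intro f hf
              have h0 := q.edges_subset_edgeSet hf
              rw [mem_edgeSet_HH] at h0
              rw [edgeSet_fromEdgeSet, Set.mem_diff]
              refine ⟨?_, h0.2⟩
              rcases Finset.mem_insert.mp h0.1 with h | h
              · exact h ▸ Set.mem_insert _ _
              · exact Set.mem_insert_of_mem _ (by exact_mod_cast h)
            refine ⟨a, b, hfF, ?_, hncon⟩
            refine (hloc u v huv heF).2 hr tu tv htu htv ⟨w1⟩ ⟨w2⟩
              (q.transfer _ hqedge) (hqP.transfer _) s(a,b) ?_
            rw [Walk.edges_transfer]
            exact hmem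
          · -- impossible: q₁ : tu → v avoiding s(u,v)
            have hq₁F : ∀ f ∈ q₁.edges, f ∈ F := fun f hf =>
              (Finset.mem_insert.mp (edge_mem_of_walk q (hS1 hf))).resolve_left
                (fun h => hA1 (h ▸ hf))
            exact absurd ((Reachable.trans ⟨w1⟩ (reach_of_walk_subset q₁ hq₁F))) hr
      -- common tail: exchange in B
      have hGab : G.Adj a b := hF.1 (by exact_mod_cast hfF)
      have hnmem : s(a,b) ∉ B.erase s(u,v) := by
        intro hmem
        exact hncon (TCon.of_reachable (HH_adj.mpr ⟨hmem, hGab.ne⟩).reachable)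
      have hB'' : IsRootedForest G T (insert s(a,b) (B.erase s(u,v))) :=
        swap_rooted hB heB hGab hncon
      have hcost : forestCost c (insert s(a,b) (B.erase s(u,v))) =
          forestCost c B - c s(u,v) + c s(a,b) := cost_swap c heB hnmem
      have hmeasure : ((insert s(a,b) (B.erase s(u,v))) \ F).card ≤ n := by
        rw [Finset.insert_sdiff_of_mem _ hfF, Finset.erase_sdiff_comm,
          Finset.card_erase_of_mem (Finset.mem_sdiff.mpr ⟨heB, heF⟩)]
        omega
      have := ih _ hB'' hmeasure
      rw [hcost] at this
      linarith
  intro F' hF'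
  exact key _ F' hF' le_rfl

end Aux


theorem stmt_2 {V : Type*} [Fintype V] (G : SimpleGraph V) (hG : G.Connected)
    (c : Sym2 V → ℚ) (hc : ∀ e, 0 ≤ c e) (T : Set V) (hT : T.Nonempty)
    (F : Finset (Sym2 V)) (hF : IsRootedForest G T F) :
    (∀ F', IsRootedForest G T F' → forestCost c F ≤ forestCost c F')
    ↔ (∀ u v : V, G.Adj u v → s(u, v) ∉ F →
        -- case (i): `u` and `v` lie in the same component of `F`
        (((SimpleGraph.fromEdgeSet (F : Set (Sym2 V))).Reachable u v →
          ∀ p : (SimpleGraph.fromEdgeSet (F : Set (Sym2 V))).Walk u v, p.IsPath →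
            ∀ e' ∈ p.edges, c e' ≤ c s(u, v)) ∧
        -- case (ii): different components, rooted at terminals `tu` and `tv`
        (¬ (SimpleGraph.fromEdgeSet (F : Set (Sym2 V))).Reachable u v →
          ∀ tu tv : V, tu ∈ T → tv ∈ T →
            (SimpleGraph.fromEdgeSet (F : Set (Sym2 V))).Reachable u tu →
            (SimpleGraph.fromEdgeSet (F : Set (Sym2 V))).Reachable v tv →
            ∀ p : (SimpleGraph.fromEdgeSet (insert s(u, v) (F : Set (Sym2 V)))).Walk tu tv,
              p.IsPath → ∀ e' ∈ p.edges, c e' ≤ c s(u, v)))) := by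
  classical
  constructor
  · intro hmin u v huv hnm
    exact min_imp_local hF hmin huv hnm
  · intro hloc
    exact local_imp_min hF hloc
end

section
/- Let G = (V,E) be connected with nonnegative edge costs, T ⊆ V nonempty, and define drop_T(S) := c_T − c_{T∪S} for S ⊆ V \ T, where c_U is the minimum cost of a U-rooted spanning forest. Let (𝒮, z) be a fractional covering of V \ T, i.e., z : 𝒮 → ℚ≥0 with Σ_{S ∈ 𝒮, S ∋ v} z_S ≥ 1 for every v ∈ V \ T. Then c_T ≤ Σ_{S ∈ 𝒮} z_S · drop_T(S). -/
noncomputable def chainRoot {V : Type*} (par : V → V) (d : V → ℕ) (P : V → Prop)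
    [DecidablePred P] (h : ∀ v, ¬ P v → d (par v) < d v) (v : V) : V :=
  if hv : P v then v else chainRoot par d P h (par v)
termination_by d v
decreasing_by exact h v hv

lemma chainRoot_pos {V : Type*} {par : V → V} {d : V → ℕ} {P : V → Prop}
    [DecidablePred P] (h : ∀ v, ¬ P v → d (par v) < d v) {v : V} (hv : P v) :
    chainRoot par d P h v = v := by rw [chainRoot]; simp [hv]

lemma chainRoot_neg {V : Type*} {par : V → V} {d : V → ℕ} {P : V → Prop}
    [DecidablePred P] (h : ∀ v, ¬ P v → d (par v) < d v) {v : V} (hv : ¬ P v) :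
    chainRoot par d P h v = chainRoot par d P h (par v) := by
  conv_lhs => rw [chainRoot]
  simp [hv]

def forestCosts {V : Type*} (G : SimpleGraph V) (c : Sym2 V → ℚ) (T : Set V) : Set ℚ :=
  {x | ∃ F : Finset (Sym2 V), IsRootedForest G T F ∧ forestCost c F = x}

theorem stmt_3 {V : Type*} [Fintype V] [DecidableEq V] (G : SimpleGraph V) (hG : G.Connected)
    (c : Sym2 V → ℚ) (hc : ∀ e, 0 ≤ c e) (T : Set V) (hT : T.Nonempty)
    -- the fractional covering (𝒮, z) of V \ T, as an indexed finite family
    (ι : Type*) [Fintype ι] (S : ι → Finset V) (hS : ∀ i, (S i : Set V) ⊆ Tᶜ)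
    (z : ι → ℚ) (hz : ∀ i, 0 ≤ z i)
    (hcov : ∀ v : V, v ∉ T → 1 ≤ ∑ i ∈ Finset.univ.filter (fun i => v ∈ S i), z i)
    -- the optimal rooted-forest costs c_T and c_{T ∪ S}
    (cT : ℚ) (hcT : IsLeast (forestCosts G c T) cT)
    (cTS : ι → ℚ) (hcTS : ∀ i, IsLeast (forestCosts G c (T ∪ (S i : Set V))) (cTS i)) :
    cT ≤ ∑ i, z i * (cT - cTS i) := by
  classical
  obtain ⟨F, ⟨hFG, hFacyc, hFroot⟩, hFcost⟩ := hcT.1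
  set H := SimpleGraph.fromEdgeSet (F : Set (Sym2 V)) with hHdef
  -- the root of each vertex
  have hrootEx : ∀ v : V, ∃ t, t ∈ T ∧ H.Reachable v t := fun v => (hFroot v).exists
  choose root hrootT hrootR using hrootEx
  have hrootU : ∀ v t, t ∈ T → H.Reachable v t → t = root v := fun v t ht hr =>
    (hFroot v).unique ⟨ht, hr⟩ ⟨hrootT v, hrootR v⟩
  have hrootfix : ∀ t, t ∈ T → root t = t := fun t ht =>
    (hrootU t t ht (SimpleGraph.Reachable.refl t)).symm
  -- the unique path to the root, and its length
  have hQex : ∀ v : V, ∃ w : H.Walk v (root v), w.IsPath := fun v =>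
    ⟨(hrootR v).some.toPath.val, (hrootR v).some.toPath.property⟩
  choose Q hQp using hQex
  have hQu : ∀ v (w : H.Walk v (root v)), w.IsPath → w = Q v := fun v w hw =>
    congrArg Subtype.val (hFacyc.path_unique ⟨w, hw⟩ ⟨Q v, hQp v⟩)
  obtain ⟨d, hddef⟩ : ∃ d : V → ℕ, ∀ v, d v = (Q v).length := ⟨_, fun _ => rfl⟩
  have hdmin : ∀ v (w : H.Walk v (root v)), d v ≤ w.length := by
    intro v w
    have h1 := hQu v w.bypass w.bypass_isPath
    have h2 := SimpleGraph.Walk.length_bypass_le w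
    rw [h1] at h2
    rw [hddef]
    exact h2
  have hd0 : ∀ v, v = root v → d v = 0 := by
    intro v hv
    have := hdmin v ((SimpleGraph.Walk.nil' v).copy rfl hv)
    simpa using this
  have hd0' : ∀ v, d v = 0 → v = root v := fun v hv =>
    SimpleGraph.Walk.eq_of_length_eq_zero (by rw [← hddef]; exact hv)
  -- path coherence
  have hcoh : ∀ v x (hx : x ∈ (Q v).support),
      root x = root v ∧ ((Q v).takeUntil x hx).length + d x = d v := by
    intro v x hx
    have hreach : H.Reachable x (root v) := ((Q v).dropUntil x hx).reachable
    have hrx : root v = root x := hrootU x (root v) (hrootT v) hreach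
    have hpath : (((Q v).dropUntil x hx).copy rfl hrx).IsPath := by
      simpa using ((hQp v).dropUntil hx)
    have hEq := hQu x _ hpath
    refine ⟨hrx.symm, ?_⟩
    have h3 : ((Q v).takeUntil x hx).length + ((Q v).dropUntil x hx).length = (Q v).length := by
      rw [← SimpleGraph.Walk.length_append, SimpleGraph.Walk.take_spec]
    have hdx : d x = ((Q v).dropUntil x hx).length := by
      rw [hddef, ← hEq, SimpleGraph.Walk.length_copy]
    rw [hddef v, hdx]; omega
  have hlt : ∀ v x (hx : x ∈ (Q v).support), x ≠ v → d x < d v := by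
    intro v x hx hne
    obtain ⟨-, hlen⟩ := hcoh v x hx
    have h0 : ((Q v).takeUntil x hx).length ≠ 0 := fun h0 =>
      hne (SimpleGraph.Walk.eq_of_length_eq_zero h0).symm
    omega
  -- the step lemma
  have hstep : ∀ a b (hab : H.Adj a b), a ∉ (Q b).support →
      (Q a).getVert 1 = b ∧ d a = d b + 1 := by
    intro a b hab hns
    have hrb : root b = root a :=
      hrootU a (root b) (hrootT b) (hab.reachable.trans (hrootR b))
    have hwp : (SimpleGraph.Walk.cons hab ((Q b).copy rfl hrb)).IsPath := by
      rw [SimpleGraph.Walk.cons_isPath_iff]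
      exact ⟨by simpa using hQp b, by simpa using hns⟩
    have hEq := hQu a _ hwp
    constructor
    · rw [← hEq, SimpleGraph.Walk.getVert_cons_succ, SimpleGraph.Walk.getVert_zero]
    · rw [hddef a, hddef b, ← hEq, SimpleGraph.Walk.length_cons,
        SimpleGraph.Walk.length_copy]
  have hA : ∀ a b, H.Adj a b → ((Q a).getVert 1 = b ∧ d a = d b + 1) ∨
      ((Q b).getVert 1 = a ∧ d b = d a + 1) := by
    intro a b hab
    by_cases hmem : a ∈ (Q b).support
    · have h1 : d a < d b := hlt b a hmem hab.ne
      have hbn : b ∉ (Q a).support := fun hb => absurd (hlt a b hb hab.ne') (by omega)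
      exact Or.inr (hstep b a hab.symm hbn)
    · exact Or.inl (hstep a b hab hmem)
  -- parent and parent edge
  obtain ⟨par, hpardef⟩ : ∃ par : V → V, ∀ v, par v = (Q v).getVert 1 := ⟨_, fun _ => rfl⟩
  obtain ⟨pe, hpedef⟩ : ∃ pe : V → Sym2 V, ∀ v, pe v = s(v, par v) := ⟨_, fun _ => rfl⟩
  have hP : ∀ v, v ≠ root v → H.Adj v (par v) ∧ d v = d (par v) + 1 := by
    intro v hv
    have hlen : 0 < (Q v).length := by
      rcases Nat.eq_zero_or_pos (Q v).length with h | h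
      · exact absurd (hd0' v (by rw [hddef]; exact h)) hv
      · exact h
    have hadj : H.Adj v (par v) := by
      have := (Q v).adj_getVert_succ (i := 0) hlen
      rw [SimpleGraph.Walk.getVert_zero] at this
      rw [hpardef]; exact this
    refine ⟨hadj, ?_⟩
    rcases hA v (par v) hadj with ⟨-, h⟩ | ⟨h1, h2⟩
    · exact h
    · exfalso
      have hmem : par v ∈ (Q v).support := by
        rw [SimpleGraph.Walk.mem_support_iff_exists_getVert]
        exact ⟨1, (hpardef v).symm, by omega⟩
      have := hlt v (par v) hmem hadj.ne'
      omega
  have hnotT : ∀ v, v ≠ root v → v ∉ T := fun v hv hvT =>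
    hv (hrootU v v hvT (SimpleGraph.Reachable.refl v))
  have hpeF : ∀ v, v ≠ root v → pe v ∈ F := by
    intro v hv
    have hadj := (hP v hv).1
    rw [hHdef, SimpleGraph.fromEdgeSet_adj] at hadj
    rw [hpedef]
    exact_mod_cast hadj.1
  have hpeInj : ∀ v w, v ≠ root v → w ≠ root w → pe v = pe w → v = w := by
    intro v w hv hw h
    rw [hpedef, hpedef, Sym2.eq_iff] at h
    rcases h with ⟨h1, -⟩ | ⟨h1, h2⟩
    · exact h1
    · exfalso
      have e1 := (hP v hv).2
      have e2 := (hP w hw).2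
      rw [h2] at e1; rw [← h1] at e2; omega
  have hpeSurj : ∀ e ∈ F, ∃ a, a ≠ root a ∧ pe a = e := by
    intro e he
    induction e using Sym2.ind with
    | _ a b =>
      have hadjG : G.Adj a b := hFG (by exact_mod_cast he)
      have hadj : H.Adj a b := by
        rw [hHdef, SimpleGraph.fromEdgeSet_adj]
        exact ⟨by exact_mod_cast he, hadjG.ne⟩
      rcases hA a b hadj with ⟨h1, h2⟩ | ⟨h1, h2⟩
      · refine ⟨a, fun h => by have := hd0 a h; omega, ?_⟩
        rw [hpedef, hpardef, h1]
      · refine ⟨b, fun h => by have := hd0 b h; omega, ?_⟩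
        rw [hpedef, hpardef, h1, Sym2.eq_swap]
  -- cT as a sum over non-roots
  have hcTsum : cT = ∑ v ∈ Finset.univ.filter (fun v => v ≠ root v), c (pe v) := by
    rw [← hFcost]
    unfold forestCost
    have himg : (Finset.univ.filter (fun v => v ≠ root v)).image pe = F := by
      apply Finset.Subset.antisymm
      · intro e he
        rw [Finset.mem_image] at he
        obtain ⟨v, hv, rfl⟩ := he
        exact hpeF v (by simpa using hv)
      · intro e he
        obtain ⟨a, ha, rfl⟩ := hpeSurj e he
        exact Finset.mem_image.mpr ⟨a, by simpa using ha, rfl⟩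
    rw [← himg, Finset.sum_image]
    intro x hx y hy h
    exact hpeInj x y (by simpa using hx) (by simpa using hy) h
  -- the key per-index bound
  have hkey : ∀ i, ∑ s ∈ S i, c (pe s) ≤ cT - cTS i := by
    intro i
    have hSroot : ∀ s ∈ S i, s ≠ root s := fun s hs h =>
      hS i (Finset.mem_coe.mpr hs) (by rw [h]; exact hrootT s)
    set Fi := F \ (S i).image pe with hFidef
    have hsub : (S i).image pe ⊆ F := by
      intro e he
      rw [Finset.mem_image] at he
      obtain ⟨s, hs, rfl⟩ := he
      exact hpeF s (hSroot s hs)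
    have hcost : forestCost c Fi = cT - ∑ s ∈ S i, c (pe s) := by
      unfold forestCost
      rw [hFidef, Finset.sum_sdiff_eq_sub hsub,
        Finset.sum_image (fun x hx y hy h => hpeInj x y (hSroot x hx) (hSroot y hy) h)]
      have : ∑ e ∈ F, c e = cT := hFcost
      rw [this]
    set H' := SimpleGraph.fromEdgeSet (Fi : Set (Sym2 V)) with hH'def
    have hFiF : Fi ⊆ F := Finset.sdiff_subset
    have hle : H' ≤ H :=
      SimpleGraph.fromEdgeSet_mono (by exact_mod_cast hFiF)
    have hFiG : (Fi : Set (Sym2 V)) ⊆ G.edgeSet :=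
      fun e he => hFG (Finset.coe_subset.mpr hFiF he)
    have hacyc : H'.IsAcyclic := by
      intro v p hp
      exact hFacyc (p.mapLe hle) ((SimpleGraph.Walk.mapLe_isCycle hle).mpr hp)
    -- surviving parent edges
    have hpe' : ∀ v, v ∉ S i → v ≠ root v → H'.Adj v (par v) ∧ s(v, par v) ∈ Fi := by
      intro v hvS hv
      have hadj := (hP v hv).1
      rw [hHdef, SimpleGraph.fromEdgeSet_adj] at hadj
      have hmem : s(v, par v) ∈ Fi := by
        rw [hFidef, Finset.mem_sdiff]
        refine ⟨by exact_mod_cast hadj.1, ?_⟩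
        intro hin
        rw [Finset.mem_image] at hin
        obtain ⟨s, hs, hseq⟩ := hin
        have : s = v := hpeInj s v (hSroot s hs) hv (by rw [hseq, hpedef v])
        exact hvS (this ▸ hs)
      refine ⟨?_, hmem⟩
      rw [hH'def, SimpleGraph.fromEdgeSet_adj]
      exact ⟨by exact_mod_cast hmem, hadj.2⟩
    -- the new root function
    have hdec : ∀ v, ¬ (v ∈ S i ∨ v = root v) → d (par v) < d v := by
      intro v hv
      push_neg at hv
      have := (hP v hv.2).2
      omega
    set nr := chainRoot par d (fun v => v ∈ S i ∨ v = root v) hdec with hnrdef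
    have hnr_fix : ∀ v, (v ∈ S i ∨ v = root v) → nr v = v := fun v hv => chainRoot_pos hdec hv
    have hnr_step : ∀ v, ¬ (v ∈ S i ∨ v = root v) → nr v = nr (par v) :=
      fun v hv => chainRoot_neg hdec hv
    have hnr_main : ∀ n v, d v ≤ n → nr v ∈ T ∪ (S i : Set V) ∧ H'.Reachable v (nr v) := by
      intro n
      induction n with
      | zero =>
        intro v hv
        have hvr : v = root v := hd0' v (Nat.le_zero.mp hv)
        rw [hnr_fix v (Or.inr hvr)]
        exact ⟨Set.mem_union_left _ (by rw [hvr]; exact hrootT v), SimpleGraph.Reachable.refl v⟩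
      | succ n ih =>
        intro v hv
        by_cases hPv : v ∈ S i ∨ v = root v
        · rw [hnr_fix v hPv]
          refine ⟨?_, SimpleGraph.Reachable.refl v⟩
          rcases hPv with h | h
          · exact Set.mem_union_right _ (by exact_mod_cast h)
          · exact Set.mem_union_left _ (by rw [h]; exact hrootT v)
        · rw [hnr_step v hPv]
          push_neg at hPv
          have hadj' := (hpe' v hPv.1 hPv.2).1
          have hdlt : d (par v) ≤ n := by
            have := hdec v (by push_neg; exact hPv)
            omega
          obtain ⟨hm, hr⟩ := ih (par v) hdlt
          exact ⟨hm, hadj'.reachable.trans hr⟩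
    have hnr_root : ∀ t, t ∈ T ∪ (S i : Set V) → nr t = t := by
      intro t ht
      rw [Set.mem_union] at ht
      rcases ht with ht | ht
      · exact hnr_fix t (Or.inr (hrootfix t ht).symm)
      · exact hnr_fix t (Or.inl (by exact_mod_cast ht))
    have hnr_adj : ∀ a b, H'.Adj a b → nr a = nr b := by
      intro a b hab'
      have habH : H.Adj a b := hle hab'
      have hmemFi : s(a, b) ∈ Fi := by
        have h2 := hab'
        rw [hH'def, SimpleGraph.fromEdgeSet_adj] at h2
        exact_mod_cast h2.1
      have key : ∀ a b, H.Adj a b → (Q a).getVert 1 = b → d a = d b + 1 →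
          s(a, b) ∈ Fi → nr a = nr b := by
        intro a b hab hparb hd hmem
        have hvr : a ≠ root a := fun h => by have := hd0 a h; omega
        have hpab : par a = b := by rw [hpardef, hparb]
        have haS : a ∉ S i := by
          intro haS
          have himg : pe a ∈ (S i).image pe := Finset.mem_image_of_mem pe haS
          rw [hFidef, Finset.mem_sdiff] at hmem
          apply hmem.2
          rwa [hpedef, hpab] at himg
        have h1 : nr a = nr (par a) := hnr_step a (by push_neg; exact ⟨haS, hvr⟩)
        rw [h1, hpab]
      rcases hA a b habH with ⟨h1, h2⟩ | ⟨h1, h2⟩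
      · exact key a b habH h1 h2 hmemFi
      · exact (key b a habH.symm h1 h2 (by rwa [Sym2.eq_swap])).symm
    have hnr_reach : ∀ a b, H'.Reachable a b → nr a = nr b := by
      intro a b hab
      obtain ⟨w⟩ := hab
      induction w with
      | nil => rfl
      | cons h p ih => exact (hnr_adj _ _ h).trans ih
    have hroots' : ∀ v : V, ∃! t, t ∈ T ∪ (S i : Set V) ∧ H'.Reachable v t := by
      intro v
      obtain ⟨hm, hr⟩ := hnr_main (d v) v le_rfl
      refine ⟨nr v, ⟨hm, hr⟩, ?_⟩
      rintro y ⟨hy, hyr⟩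
      have h1 := hnr_reach v y hyr
      rw [← hnr_root y hy, ← h1]
    have hmemCost : forestCost c Fi ∈ forestCosts G c (T ∪ (S i : Set V)) :=
      ⟨Fi, ⟨hFiG, hacyc, hroots'⟩, rfl⟩
    have := (hcTS i).2 hmemCost
    rw [hcost] at this
    linarith
  -- final computation
  have hstep1 : ∀ v ∈ Finset.univ.filter (fun v => v ≠ root v),
      c (pe v) ≤ c (pe v) * ∑ j ∈ Finset.univ.filter (fun j => v ∈ S j), z j := by
    intro v hv
    have hvT : v ∉ T := hnotT v (by simpa using hv)
    exact le_mul_of_one_le_right (hc _) (hcov v hvT)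
  calc cT = ∑ v ∈ Finset.univ.filter (fun v => v ≠ root v), c (pe v) := hcTsum
    _ ≤ ∑ v ∈ Finset.univ.filter (fun v => v ≠ root v),
          c (pe v) * ∑ j ∈ Finset.univ.filter (fun j => v ∈ S j), z j :=
        Finset.sum_le_sum hstep1
    _ ≤ ∑ v, c (pe v) * ∑ j ∈ Finset.univ.filter (fun j => v ∈ S j), z j := by
        apply Finset.sum_le_sum_of_subset_of_nonneg (Finset.filter_subset _ _)
        intro v _ _
        exact mul_nonneg (hc _) (Finset.sum_nonneg fun j _ => hz j)
    _ = ∑ v, ∑ j, if v ∈ S j then c (pe v) * z j else 0 := by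
        refine Finset.sum_congr rfl fun v _ => ?_
        rw [Finset.mul_sum, Finset.sum_filter]
    _ = ∑ j, ∑ v, if v ∈ S j then c (pe v) * z j else 0 := Finset.sum_comm
    _ = ∑ j, ∑ v ∈ S j, c (pe v) * z j := by
        refine Finset.sum_congr rfl fun j _ => ?_
        rw [Finset.sum_ite_mem, Finset.univ_inter]
    _ = ∑ j, z j * ∑ v ∈ S j, c (pe v) := by
        refine Finset.sum_congr rfl fun j _ => ?_
        rw [Finset.mul_sum]
        exact Finset.sum_congr rfl fun v _ => mul_comm _ _
    _ ≤ ∑ j, z j * (cT - cTS j) :=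
        Finset.sum_le_sum fun j _ => mul_le_mul_of_nonneg_left (hkey j) (hz j)
end

section
/- (Bridge Lemma, probabilistic form) Let G = (V,E) be connected with nonnegative edge costs, T ⊆ V nonempty, and let μ be a probability distribution over subsets of V \ T such that every v ∈ V \ T satisfies Pr_{S∼μ}[v ∉ S] ≤ γ for some γ ≥ 0. Then E_{S∼μ}[c_{T∪S}] ≤ γ · c_T, where c_U denotes the minimum cost of a U-rooted spanning forest. -/
set_option linter.unusedSectionVars false
set_option maxHeartbeats 1000000

open SimpleGraph Finset

namespace BridgeAux

variable {V : Type*} [DecidableEq V] (H : SimpleGraph V) (T : Set V)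
  (hroot : ∀ v : V, ∃! t : V, t ∈ T ∧ H.Reachable v t)

noncomputable def rt (v : V) : V := (hroot v).exists.choose

lemma rt_mem (v : V) : rt H T hroot v ∈ T := (hroot v).exists.choose_spec.1

lemma rt_reach (v : V) : H.Reachable v (rt H T hroot v) := (hroot v).exists.choose_spec.2

lemma rt_unique {v t : V} (ht : t ∈ T) (h : H.Reachable v t) : t = rt H T hroot v :=
  (hroot v).unique ⟨ht, h⟩ ⟨rt_mem H T hroot v, rt_reach H T hroot v⟩

noncomputable def pa (v : V) : H.Walk v (rt H T hroot v) :=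
  ((rt_reach H T hroot v).some.toPath : H.Path _ _).1

lemma pa_isPath (v : V) : (pa H T hroot v).IsPath :=
  ((rt_reach H T hroot v).some.toPath).2

lemma rt_eq_of_mem {v : V} (hv : v ∈ T) : rt H T hroot v = v :=
  (hroot v).unique ⟨rt_mem H T hroot v, rt_reach H T hroot v⟩ ⟨hv, Reachable.refl v⟩

lemma ne_rt {v : V} (hv : v ∉ T) : v ≠ rt H T hroot v := by
  intro h; exact hv (h ▸ rt_mem H T hroot v)

lemma not_nil {v : V} (hv : v ∉ T) : ¬ (pa H T hroot v).Nil :=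
  SimpleGraph.Walk.not_nil_of_ne (ne_rt H T hroot hv)

noncomputable def par (v : V) : V := (pa H T hroot v).getVert 1

lemma adj_par {v : V} (hv : v ∉ T) : H.Adj v (par H T hroot v) :=
  SimpleGraph.Walk.adj_snd (not_nil H T hroot hv)

lemma rt_par (v : V) : rt H T hroot (par H T hroot v) = rt H T hroot v :=
  (rt_unique H T hroot (rt_mem H T hroot v) ((pa H T hroot v).tail.reachable)).symm

lemma len_par (hA : H.IsAcyclic) {v : V} (hv : v ∉ T) :
    (pa H T hroot (par H T hroot v)).length + 1 = (pa H T hroot v).length := by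
  have hnil := not_nil H T hroot hv
  have h1 : ((pa H T hroot v).tail).IsPath := (pa_isPath H T hroot v).tail
  have h2 : (((pa H T hroot (par H T hroot v))).copy rfl (rt_par H T hroot v)).IsPath := by
    rw [SimpleGraph.Walk.isPath_copy]; exact pa_isPath H T hroot _
  have heq := hA.path_unique (⟨_, h1⟩ : H.Path _ _) ⟨_, h2⟩
  have hlen : (pa H T hroot v).tail.length = (pa H T hroot (par H T hroot v)).length := by
    have := congrArg (fun q : H.Path _ _ => q.1.length) heq
    exact this.trans (SimpleGraph.Walk.length_copy (pa H T hroot (par H T hroot v)) rfl (rt_par H T hroot v))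
  have := SimpleGraph.Walk.length_tail_add_one hnil
  omega

lemma epar_mem {v : V} (hv : v ∉ T) : s(v, par H T hroot v) ∈ H.edgeSet :=
  (adj_par H T hroot hv)

lemma epar_inj (hA : H.IsAcyclic) {v w : V} (hv : v ∉ T) (hw : w ∉ T)
    (h : s(v, par H T hroot v) = s(w, par H T hroot w)) : v = w := by
  rw [Sym2.eq_iff] at h
  rcases h with ⟨h1, _⟩ | ⟨h1, h2⟩
  · exact h1
  · exfalso
    have l1 := len_par H T hroot hA hv
    have l2 := len_par H T hroot hA hw
    rw [h2] at l1
    rw [← h1] at l2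
    omega

lemma epar_surj (hA : H.IsAcyclic) {e : Sym2 V} (he : e ∈ H.edgeSet) :
    ∃ v, v ∉ T ∧ s(v, par H T hroot v) = e := by
  induction e using Sym2.ind with
  | _ a b =>
  rw [SimpleGraph.mem_edgeSet] at he
  have hrb : rt H T hroot b = rt H T hroot a :=
    (rt_unique H T hroot (rt_mem H T hroot a)
      ((he.symm.reachable).trans (rt_reach H T hroot a))).symm
  by_cases hb : b ∈ (pa H T hroot a).support
  · have haT : a ∉ T := by
      intro haT
      have hra : rt H T hroot a = a := rt_eq_of_mem H T hroot haT
      have hloop : (⟨(pa H T hroot a).copy rfl hra, by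
          rw [SimpleGraph.Walk.isPath_copy]; exact pa_isPath H T hroot a⟩ : H.Path a a)
          = SimpleGraph.Path.nil := SimpleGraph.Path.loop_eq _
      have hsupp : (pa H T hroot a).support = [a] := by
        have := congrArg (fun q : H.Path a a => q.1.support) hloop
        simpa using this
      rw [hsupp] at hb
      simp at hb
      exact he.ne hb.symm
    refine ⟨a, haT, ?_⟩
    have hq : ((pa H T hroot a).takeUntil b hb) = SimpleGraph.Walk.cons he SimpleGraph.Walk.nil := by
      have h1 : ((pa H T hroot a).takeUntil b hb).IsPath :=
        (pa_isPath H T hroot a).takeUntil hb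
      have h2 : (SimpleGraph.Walk.cons he SimpleGraph.Walk.nil).IsPath := by
        simp [SimpleGraph.Walk.cons_isPath_iff, he.ne]
      exact congrArg Subtype.val (hA.path_unique (⟨_, h1⟩ : H.Path a b) ⟨_, h2⟩)
    have hspec := (pa H T hroot a).take_spec hb
    rw [hq] at hspec
    have hpar : par H T hroot a = b := by
      rw [par, ← hspec]
      simp [SimpleGraph.Walk.cons_append, SimpleGraph.Walk.getVert_cons_succ]
    rw [hpar]
  · have hbT : b ∉ T := by
      intro hbT
      have h1 : rt H T hroot b = b := rt_eq_of_mem H T hroot hbT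
      have : b ∈ (pa H T hroot a).support := by
        have h2 : b = rt H T hroot a := by rw [← h1, hrb]
        rw [h2]; exact SimpleGraph.Walk.end_mem_support _
      exact hb this
    refine ⟨b, hbT, ?_⟩
    have h2 : ((SimpleGraph.Walk.cons he.symm (pa H T hroot a)).copy rfl hrb.symm).IsPath := by
      rw [SimpleGraph.Walk.isPath_copy, SimpleGraph.Walk.cons_isPath_iff]
      exact ⟨pa_isPath H T hroot a, hb⟩
    have heq := hA.path_unique (⟨pa H T hroot b, pa_isPath H T hroot b⟩ : H.Path _ _) ⟨_, h2⟩
    have hv : pa H T hroot b = (SimpleGraph.Walk.cons he.symm (pa H T hroot a)).copy rfl hrb.symm :=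
      congrArg Subtype.val heq
    have hpar : par H T hroot b = a := by
      rw [par, hv]
      simp [SimpleGraph.Walk.getVert_copy, SimpleGraph.Walk.getVert_cons_succ]
    rw [hpar]
    exact Sym2.eq_swap

variable [Fintype V] [DecidablePred (· ∈ T)]

noncomputable def eforest (U : Finset V) : Finset (Sym2 V) :=
  Finset.image (fun v => s(v, par H T hroot v))
    (Finset.univ.filter (fun v => v ∉ T ∧ v ∉ U))

noncomputable def nr (hA : H.IsAcyclic) (U : Finset V) (v : V) : V :=
  if v ∈ T ∨ v ∈ U then v else nr hA U (par H T hroot v)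
termination_by (pa H T hroot v).length
decreasing_by
  have := len_par H T hroot hA (show v ∉ T by tauto)
  omega

lemma nr_fix (hA : H.IsAcyclic) (U : Finset V) {v : V} (h : v ∈ T ∨ v ∈ U) :
    nr H T hroot hA U v = v := by
  rw [nr, if_pos h]

lemma nr_spec (hA : H.IsAcyclic) (U : Finset V) (v : V) :
    (nr H T hroot hA U v ∈ T ∨ nr H T hroot hA U v ∈ U) ∧
      (fromEdgeSet (eforest H T hroot U : Set (Sym2 V))).Reachable v (nr H T hroot hA U v) := by
  generalize hn : (pa H T hroot v).length = n
  induction n using Nat.strong_induction_on generalizing v with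
  | _ n ih =>
    subst hn
    rw [nr]
    by_cases h : v ∈ T ∨ v ∈ U
    · rw [if_pos h]; exact ⟨h, Reachable.refl v⟩
    · rw [if_neg h]
      have hvT : v ∉ T := fun hT => h (Or.inl hT)
      have hlen := len_par H T hroot hA hvT
      obtain ⟨m1, m2⟩ := ih _ (by omega) (par H T hroot v) rfl
      refine ⟨m1, ?_⟩
      have hadj : (fromEdgeSet (eforest H T hroot U : Set (Sym2 V))).Adj v (par H T hroot v) := by
        rw [fromEdgeSet_adj]
        refine ⟨?_, (adj_par H T hroot hvT).ne⟩
        simp only [eforest, Finset.coe_image, Set.mem_image, Finset.mem_coe, Finset.mem_filter,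
          Finset.mem_univ, true_and]
        exact ⟨v, ⟨hvT, fun hU => h (Or.inr hU)⟩, rfl⟩
      exact hadj.reachable.trans m2

lemma nr_adj (hA : H.IsAcyclic) (U : Finset V) {a b : V}
    (hadj : (fromEdgeSet (eforest H T hroot U : Set (Sym2 V))).Adj a b) :
    nr H T hroot hA U a = nr H T hroot hA U b := by
  rw [fromEdgeSet_adj] at hadj
  obtain ⟨hmem, hne⟩ := hadj
  simp only [eforest, Finset.coe_image, Set.mem_image, Finset.mem_coe, Finset.mem_filter,
    Finset.mem_univ, true_and] at hmem
  obtain ⟨w, ⟨hwT, hwU⟩, heq⟩ := hmem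
  have hstep : nr H T hroot hA U w = nr H T hroot hA U (par H T hroot w) := by
    rw [nr]; rw [if_neg (by tauto)]
  rw [Sym2.eq_iff] at heq
  rcases heq with ⟨h1, h2⟩ | ⟨h1, h2⟩
  · rw [← h1, ← h2]; exact hstep
  · rw [← h1, ← h2]; exact hstep.symm

lemma nr_reach_eq (hA : H.IsAcyclic) (U : Finset V) {a b : V}
    (h : (fromEdgeSet (eforest H T hroot U : Set (Sym2 V))).Reachable a b) :
    nr H T hroot hA U a = nr H T hroot hA U b := by
  obtain ⟨w⟩ := h
  induction w with
  | nil => rfl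
  | cons hadj _ ih => exact (nr_adj H T hroot hA U hadj).trans ih

lemma acyclic_anti {G₁ G₂ : SimpleGraph V} (hle : G₁ ≤ G₂) (h2 : G₂.IsAcyclic) :
    G₁.IsAcyclic := fun _ c hc => h2 (c.mapLe hle) (hc.mapLe hle)

end BridgeAux

theorem stmt_4 {V : Type*} [Fintype V] [DecidableEq V] (G : SimpleGraph V) (hG : G.Connected)
    (c : Sym2 V → ℚ) (hc : ∀ e, 0 ≤ c e) (T : Set V) (hT : T.Nonempty)
    -- μ: a finitely supported probability distribution over subsets of V \ T
    (ι : Type*) [Fintype ι] (S : ι → Finset V) (hS : ∀ i, (S i : Set V) ⊆ Tᶜ)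
    (p : ι → ℚ) (hp : ∀ i, 0 ≤ p i) (hp1 : ∑ i, p i = 1)
    -- every v ∈ V \ T is missed with probability at most γ
    (γ : ℚ) (hγ : 0 ≤ γ)
    (hmiss : ∀ v : V, v ∉ T → ∑ i ∈ Finset.univ.filter (fun i => v ∉ S i), p i ≤ γ)
    (cT : ℚ) (hcT : IsLeast (forestCosts G c T) cT)
    (cTS : ι → ℚ) (hcTS : ∀ i, IsLeast (forestCosts G c (T ∪ (S i : Set V))) (cTS i)) :
    ∑ i, p i * cTS i ≤ γ * cT := by
  classical
  open BridgeAux Finset in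
  obtain ⟨F, hF, hFc⟩ := hcT.1
  obtain ⟨hFsub, hA, hroot⟩ := hF
  set H := SimpleGraph.fromEdgeSet (F : Set (Sym2 V)) with hH
  -- edges of the parent map lie in H
  have hHedge : ∀ {v : V}, v ∉ T → s(v, par H T hroot v) ∈ H.edgeSet :=
    fun hv => epar_mem H T hroot hv
  have hHsub : H.edgeSet ⊆ (F : Set (Sym2 V)) := by
    rw [hH, SimpleGraph.edgeSet_fromEdgeSet]; exact Set.diff_subset
  -- per-index bound
  have key : ∀ i, cTS i ≤
      ∑ v ∈ Finset.univ.filter (fun v => v ∉ T ∧ v ∉ S i), c (s(v, par H T hroot v)) := by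
    intro i
    have hRF : IsRootedForest G (T ∪ (S i : Set V)) (eforest H T hroot (S i)) := by
      refine ⟨?_, ?_, ?_⟩
      · intro e he
        simp only [eforest, Finset.coe_image, Set.mem_image, Finset.mem_coe,
          Finset.mem_filter, Finset.mem_univ, true_and] at he
        obtain ⟨v, ⟨hvT, _⟩, rfl⟩ := he
        exact hFsub (hHsub (hHedge hvT))
      · refine acyclic_anti ?_ hA
        refine le_trans (SimpleGraph.fromEdgeSet_mono ?_)
          (le_of_eq (SimpleGraph.fromEdgeSet_edgeSet H))
        intro e he
        simp only [eforest, Finset.coe_image, Set.mem_image, Finset.mem_coe,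
          Finset.mem_filter, Finset.mem_univ, true_and] at he
        obtain ⟨v, ⟨hvT, _⟩, rfl⟩ := he
        exact hHedge hvT
      · intro v
        obtain ⟨hmem, hreach⟩ := nr_spec H T hroot hA (S i) v
        refine ⟨nr H T hroot hA (S i) v, ⟨?_, hreach⟩, ?_⟩
        · rcases hmem with h | h
          · exact Or.inl h
          · exact Or.inr h
        · rintro t' ⟨ht', hr'⟩
          have h1 := nr_reach_eq H T hroot hA (S i) hr'
          have h2 : nr H T hroot hA (S i) t' = t' := by
            refine nr_fix H T hroot hA (S i) ?_
            rcases ht' with h | h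
            · exact Or.inl h
            · exact Or.inr h
          rw [← h2, ← h1]
    have hmem : (∑ v ∈ Finset.univ.filter (fun v => v ∉ T ∧ v ∉ S i),
        c (s(v, par H T hroot v))) ∈ forestCosts G c (T ∪ (S i : Set V)) := by
      refine ⟨eforest H T hroot (S i), hRF, ?_⟩
      rw [forestCost, eforest, Finset.sum_image]
      intro a ha b hb hab
      simp only [Finset.mem_coe, Finset.mem_filter] at ha hb
      exact epar_inj H T hroot hA ha.2.1 hb.2.1 hab
    exact (hcTS i).2 hmem
  -- value of cT
  have hDF : Finset.image (fun v => s(v, par H T hroot v))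
      (Finset.univ.filter (fun v => v ∉ T)) = F := by
    ext e
    simp only [Finset.mem_image, Finset.mem_filter, Finset.mem_univ, true_and]
    constructor
    · rintro ⟨v, hv, rfl⟩
      exact hHsub (hHedge hv)
    · intro he
      have heH : e ∈ H.edgeSet := by
        rw [hH, SimpleGraph.edgeSet_fromEdgeSet]
        exact ⟨he, G.not_isDiag_of_mem_edgeSet (hFsub he)⟩
      exact epar_surj H T hroot hA heH
  have hcTval : ∑ v ∈ Finset.univ.filter (fun v => v ∉ T), c (s(v, par H T hroot v)) = cT := by
    rw [← hFc, forestCost, ← hDF, Finset.sum_image]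
    intro a ha b hb hab
    simp only [Finset.mem_coe, Finset.mem_filter] at ha hb
    exact epar_inj H T hroot hA ha.2 hb.2 hab
  -- final computation
  calc ∑ i, p i * cTS i
      ≤ ∑ i, p i * ∑ v ∈ Finset.univ.filter (fun v => v ∉ T ∧ v ∉ S i),
          c (s(v, par H T hroot v)) := by
        exact Finset.sum_le_sum fun i _ => mul_le_mul_of_nonneg_left (key i) (hp i)
    _ = ∑ i, ∑ v ∈ Finset.univ.filter (fun v => v ∉ T),
          p i * (if v ∉ S i then c (s(v, par H T hroot v)) else 0) := by
        refine Finset.sum_congr rfl fun i _ => ?_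
        rw [Finset.mul_sum]
        rw [show (Finset.univ.filter (fun v => v ∉ T ∧ v ∉ S i)) =
          (Finset.univ.filter (fun v => v ∉ T)).filter (fun v => v ∉ S i) by
            rw [Finset.filter_filter]]
        rw [Finset.sum_filter]
        refine Finset.sum_congr rfl fun v _ => ?_
        split <;> simp
    _ = ∑ v ∈ Finset.univ.filter (fun v => v ∉ T),
          (∑ i ∈ Finset.univ.filter (fun i => v ∉ S i), p i) * c (s(v, par H T hroot v)) := by
        rw [Finset.sum_comm]
        refine Finset.sum_congr rfl fun v _ => ?_
        rw [Finset.sum_filter, Finset.sum_mul]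
        refine Finset.sum_congr rfl fun i _ => ?_
        split <;> simp
    _ ≤ ∑ v ∈ Finset.univ.filter (fun v => v ∉ T), γ * c (s(v, par H T hroot v)) := by
        refine Finset.sum_le_sum fun v hv => ?_
        simp only [Finset.mem_filter] at hv
        exact mul_le_mul_of_nonneg_right (hmiss v hv.2) (hc _)
    _ = γ * cT := by rw [← Finset.mul_sum, hcTval]
end

section
/- Define f : [0,1] → ℝ by f(τ) = 1 − τ + 2γ(τ)·τ + 2e^{−γ(τ)} where γ(τ) = min{1, ln(1/τ)} (with γ(0) = 1). Then f(τ) ≤ 1 + 2e^{−1/2} for all τ ∈ [0,1], with the maximum attained at τ = e^{−1/2}. -/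
/-- γ(τ) = min{1, ln(1/τ)}, with γ(0) := 1. -/
noncomputable def gammaOf (τ : ℝ) : ℝ := if τ = 0 then 1 else min 1 (Real.log (1 / τ))

/-- f(τ) = 1 − τ + 2γ(τ)τ + 2e^{−γ(τ)}. -/
noncomputable def fOf (τ : ℝ) : ℝ := 1 - τ + 2 * gammaOf τ * τ + 2 * Real.exp (-(gammaOf τ))

lemma key_ineq {τ : ℝ} (hτ : 0 < τ) :
    τ - 2 * τ * Real.log τ ≤ 2 * Real.exp (-(1/2)) := by
  have hx : 0 < Real.exp (-(1/2)) / τ := div_pos (Real.exp_pos _) hτ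
  have h := Real.log_le_sub_one_of_pos hx
  rw [Real.log_div (Real.exp_ne_zero _) (ne_of_gt hτ), Real.log_exp] at h
  have h2 : Real.exp (-(1/2)) / τ * τ = Real.exp (-(1/2)) := div_mul_cancel₀ _ (ne_of_gt hτ)
  nlinarith [mul_le_mul_of_nonneg_right h (le_of_lt hτ)]

lemma three_le : (3:ℝ) * Real.exp (-1) ≤ 2 * Real.exp (-(1/2)) := by
  have h : (1:ℝ) + 1/2 ≤ Real.exp (1/2) := by
    have := Real.add_one_le_exp (1/2:ℝ); linarith
  have he : Real.exp (-1) * Real.exp (1/2) = Real.exp (-(1/2)) := by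
    rw [← Real.exp_add]; norm_num
  nlinarith [Real.exp_pos (-1:ℝ)]

theorem stmt_9 :
    (∀ τ : ℝ, 0 ≤ τ → τ ≤ 1 → fOf τ ≤ 1 + 2 * Real.exp (-(1 / 2))) ∧
      fOf (Real.exp (-(1 / 2))) = 1 + 2 * Real.exp (-(1 / 2)) := by
  constructor
  · intro τ h0 h1
    rcases eq_or_lt_of_le h0 with h0 | h0
    · simp [fOf, gammaOf, ← h0]
      have := Real.exp_le_exp.mpr (show (-1:ℝ) ≤ -(1/2) by norm_num)
      linarith
    · unfold fOf gammaOf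
      rw [if_neg (ne_of_gt h0)]
      rcases le_total 1 (Real.log (1/τ)) with hc | hc
      · rw [min_eq_left hc]
        -- then τ ≤ e^{-1}
        have hτ : τ ≤ Real.exp (-1) := by
          have h1' := Real.exp_le_exp.mpr hc
          rw [Real.exp_log (by positivity)] at h1'
          have h2 := (le_div_iff₀ h0).mp h1'
          have h3 : Real.exp (-1) * Real.exp 1 = 1 := by
            rw [← Real.exp_add]; norm_num
          nlinarith [Real.exp_pos (-1:ℝ)]
        have := three_le
        linarith
      · rw [min_eq_right hc]
        rw [Real.log_div one_ne_zero (ne_of_gt h0), Real.log_one, zero_sub, neg_neg,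
          Real.exp_log h0]
        have := key_ineq h0
        linarith
  · unfold fOf gammaOf
    rw [if_neg (ne_of_gt (Real.exp_pos _))]
    rw [Real.log_div one_ne_zero (ne_of_gt (Real.exp_pos _)), Real.log_one, Real.log_exp]
    rw [zero_sub, neg_neg, min_eq_right (by norm_num : (1:ℝ)/2 ≤ 1)]
    ring
end

section
/- Let x be a feasible solution to LP-kTSPP (with flows x_i and coverage variables z_{i,v}, where Σ_i z_{i,v} = 1 for each non-terminal v and x_i(δ^in(U)) ≥ z_{i,v} whenever v ∈ U ⊆ V \ {s_i}). Define x_a := Σ_{i∈[k]} x_{i,a}. Then for every nonempty U ⊆ V \ T, x(δ^in(U)) ≥ 1; hence the minimum cost of a T-rooted spanning forest is at most the LP objective Σ_i Σ_a c(a) x_{i,a}. -/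
def IsDirRootedForest {V : Type*} [Fintype V] [DecidableEq V]
    (A : Finset (V × V)) (T : Finset V) (B : Finset (V × V)) : Prop :=
  B ⊆ A ∧
  (∀ v : V, v ∉ T → (Finset.univ.filter (fun u => (u, v) ∈ B)).card = 1) ∧
  (∀ t ∈ T, ∀ u : V, (u, t) ∉ B) ∧
  (∀ v : V, v ∉ T → ∃ t ∈ T, Relation.ReflTransGen (fun a b => (a, b) ∈ B) t v)

def inArcs {V : Type*} [DecidableEq V] (A : Finset (V × V)) (U : Finset V) :
    Finset (V × V) :=
  A.filter (fun a => a.1 ∉ U ∧ a.2 ∈ U)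

def outArcs {V : Type*} [DecidableEq V] (A : Finset (V × V)) (U : Finset V) :
    Finset (V × V) :=
  A.filter (fun a => a.1 ∈ U ∧ a.2 ∉ U)

namespace KTSPP

open Finset Relation

variable {V : Type*} [Fintype V] [DecidableEq V]

/-- zero-cost arcs -/
def Zar (A : Finset (V × V)) (c : V × V → ℚ) (u v : V) : Prop :=
  (u, v) ∈ A ∧ c (u, v) = 0

/-- strongly connected via internal zero-cost arcs -/
def ZSC (A : Finset (V × V)) (c : V × V → ℚ) (U : Finset V) : Prop :=
  ∀ u ∈ U, ∀ v ∈ U,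
    Relation.ReflTransGen (fun a b => a ∈ U ∧ b ∈ U ∧ Zar A c a b) u v

lemma exit_lemma {E' : V → V → Prop} {R : Finset V} {p : V} (hp : p ∈ R) :
    ∀ {q}, Relation.ReflTransGen E' p q → q ∉ R →
      ∃ u v, E' u v ∧ u ∈ R ∧ v ∉ R := by
  intro q h
  induction h with
  | refl => exact fun hq => absurd hp hq
  | @tail w v h1 h2 ih =>
    intro hq
    by_cases hw : w ∈ R
    · exact ⟨w, v, h2, hw, hq⟩
    · exact ih hw

structure Inv (A : Finset (V × V)) (T : Finset V) (c : V × V → ℚ)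
    (F : Finset (Finset V)) (R : Finset V) (B : Finset (V × V)) : Prop where
  subA : B ⊆ A
  zero : ∀ a ∈ B, c a = 0
  indeg : ∀ v ∈ R, v ∉ T → (Finset.univ.filter (fun u => (u, v) ∈ B)).card = 1
  noOut : ∀ v : V, v ∉ R → ∀ u, (u, v) ∉ B
  noT : ∀ t ∈ T, ∀ u, (u, t) ∉ B
  reach : ∀ v ∈ R, v ∉ T →
    ∃ t ∈ T, Relation.ReflTransGen (fun a b => (a, b) ∈ B) t v
  subT : T ⊆ R
  cross : ∀ M ∈ F, (inArcs B M).card ≤ 1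

lemma heads_mem {A : Finset (V × V)} {T : Finset V} {c : V × V → ℚ}
    {F : Finset (Finset V)} {R : Finset V} {B : Finset (V × V)}
    (inv : Inv A T c F R B) : ∀ a ∈ B, a.2 ∈ R := by
  intro a ha
  by_contra h
  exact inv.noOut a.2 h a.1 (by simpa using ha)

lemma cross_empty {A : Finset (V × V)} {T : Finset V} {c : V × V → ℚ}
    {F : Finset (Finset V)} {R : Finset V} {B : Finset (V × V)}
    (inv : Inv A T c F R B) {M : Finset V} (hM : ∀ w ∈ M, w ∉ R) :
    inArcs B M = ∅ := by
  apply Finset.eq_empty_of_forall_notMem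
  intro a ha
  rw [inArcs, Finset.mem_filter] at ha
  exact hM a.2 ha.2.2 (heads_mem inv a ha.1)

lemma build (A : Finset (V × V)) (T : Finset V) (c : V × V → ℚ)
    (F : Finset (Finset V))
    (hlam : ∀ M ∈ F, ∀ M' ∈ F, M ⊆ M' ∨ M' ⊆ M ∨ ∀ v ∈ M, v ∉ M')
    (hzsc : ∀ M ∈ F, ZSC A c M)
    (hreach : ∀ v : V, v ∉ T → ∃ t ∈ T, Relation.ReflTransGen (Zar A c) t v) :
    ∀ (n : ℕ) (R : Finset V) (B : Finset (V × V)),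
      (Finset.univ \ R).card ≤ n → Inv A T c F R B →
      ∃ B', IsDirRootedForest A T B' ∧ (∀ M ∈ F, (inArcs B' M).card ≤ 1) ∧
        ∀ a ∈ B', c a = 0 := by
  intro n
  induction n with
  | zero =>
    intro R B hcard inv
    have hR : Finset.univ ⊆ R := by
      rw [← Finset.sdiff_eq_empty_iff_subset]
      exact Finset.card_eq_zero.1 (Nat.le_zero.1 hcard)
    exact ⟨B, ⟨inv.subA, fun v hv => inv.indeg v (hR (Finset.mem_univ v)) hv,
      inv.noT, fun v hv => inv.reach v (hR (Finset.mem_univ v)) hv⟩,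
      inv.cross, inv.zero⟩
  | succ n ih =>
    intro R B hcard inv
    by_cases hR : Finset.univ \ R = ∅
    · have hR' : Finset.univ ⊆ R := Finset.sdiff_eq_empty_iff_subset.1 hR
      exact ⟨B, ⟨inv.subA, fun v hv => inv.indeg v (hR' (Finset.mem_univ v)) hv,
        inv.noT, fun v hv => inv.reach v (hR' (Finset.mem_univ v)) hv⟩,
        inv.cross, inv.zero⟩
    · obtain ⟨v₁, hv₁⟩ := Finset.nonempty_of_ne_empty hR
      rw [Finset.mem_sdiff] at hv₁
      have hv₁R : v₁ ∉ R := hv₁.2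
      have hv₁T : v₁ ∉ T := fun h => hv₁R (inv.subT h)
      -- select a good arc
      have hstep : ∃ u v, Zar A c u v ∧ u ∈ R ∧ v ∉ R ∧
          ∀ M ∈ F, v ∈ M → u ∉ M → ∀ w ∈ M, w ∉ R := by
        set P := F.filter (fun M => (∃ w ∈ M, w ∈ R) ∧ ∃ w ∈ M, w ∉ R) with hPdef
        by_cases hPne : P.Nonempty
        · obtain ⟨M₀, hM₀P, hmin⟩ := P.exists_min_image Finset.card hPne
          rw [hPdef, Finset.mem_filter] at hM₀P
          obtain ⟨hM₀F, ⟨p, hpM, hpR⟩, ⟨q, hqM, hqR⟩⟩ := hM₀P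
          obtain ⟨u, v, ⟨huM, hvM, huv⟩, huR, hvR⟩ :=
            exit_lemma hpR (hzsc M₀ hM₀F p hpM q hqM) hqR
          refine ⟨u, v, huv, huR, hvR, ?_⟩
          intro M hMF hvM' huM' w hwM hwR
          have hMP : M ∈ P := by
            rw [hPdef, Finset.mem_filter]
            exact ⟨hMF, ⟨w, hwM, hwR⟩, ⟨v, hvM', hvR⟩⟩
          rcases hlam M hMF M₀ hM₀F with h | h | h
          · have hss : M ⊂ M₀ := by
              rw [Finset.ssubset_def]
              exact ⟨h, fun h' => huM' (h' huM)⟩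
            exact absurd (hmin M hMP) (not_le.2 (Finset.card_lt_card hss))
          · exact huM' (h huM)
          · exact h v hvM' hvM
        · obtain ⟨t0, ht0, hpath⟩ := hreach v₁ hv₁T
          obtain ⟨u, v, huv, huR, hvR⟩ := exit_lemma (inv.subT ht0) hpath hv₁R
          refine ⟨u, v, huv, huR, hvR, ?_⟩
          intro M hMF hvM huM w hwM hwR
          have hMP : M ∈ P := by
            rw [hPdef, Finset.mem_filter]
            exact ⟨hMF, ⟨w, hwM, hwR⟩, ⟨v, hvM, hvR⟩⟩
          exact hPne ⟨M, hMP⟩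
      obtain ⟨u, v, huv, huR, hvR, hnew⟩ := hstep
      have hvT : v ∉ T := fun h => hvR (inv.subT h)
      have inv' : Inv A T c F (insert v R) (insert (u, v) B) := by
        constructor
        · exact Finset.insert_subset_iff.2 ⟨huv.1, inv.subA⟩
        · intro a ha
          rcases Finset.mem_insert.1 ha with rfl | ha
          · exact huv.2
          · exact inv.zero a ha
        · intro v' hv' hv'T
          rcases Finset.mem_insert.1 hv' with rfl | hv'R
          · have : (Finset.univ.filter (fun p => (p, v') ∈ insert (u, v') B)) = {u} := by
              ext p
              simp only [Finset.mem_filter, Finset.mem_univ, true_and,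
                Finset.mem_insert, Finset.mem_singleton]
              constructor
              · rintro (h | h)
                · exact congrArg Prod.fst h
                · exact absurd h (inv.noOut v' hvR p)
              · rintro rfl; exact Or.inl rfl
            rw [this, Finset.card_singleton]
          · have : (Finset.univ.filter (fun p => (p, v') ∈ insert (u, v) B)) =
                (Finset.univ.filter (fun p => (p, v') ∈ B)) := by
              apply Finset.filter_congr
              intro p _
              simp only [Finset.mem_insert]
              constructor
              · rintro (h | h)
                · exact absurd (congrArg Prod.snd h) (by simp; rintro rfl; exact hvR hv'R)
                · exact h
              · exact Or.inr
            rw [this]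
            exact inv.indeg v' hv'R hv'T
        · intro v' hv' p hp
          rcases Finset.mem_insert.1 hp with h | h
          · rw [Prod.mk.injEq] at h
            exact hv' (h.2 ▸ Finset.mem_insert_self v R)
          · exact inv.noOut v' (fun h' => hv' (Finset.mem_insert_of_mem h')) p h
        · intro t0 ht0 p hp
          rcases Finset.mem_insert.1 hp with h | h
          · rw [Prod.mk.injEq] at h
            exact hvT (h.2 ▸ ht0)
          · exact inv.noT t0 ht0 p h
        · intro v' hv' hv'T
          rcases Finset.mem_insert.1 hv' with rfl | hv'R
          · by_cases huT : u ∈ T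
            · exact ⟨u, huT, Relation.ReflTransGen.single (Finset.mem_insert_self _ _)⟩
            · obtain ⟨t0, ht0, hp⟩ := inv.reach u huR huT
              exact ⟨t0, ht0, (hp.lift id (fun a b hab => Finset.mem_insert_of_mem hab)).tail
                (Finset.mem_insert_self _ _)⟩
          · obtain ⟨t0, ht0, hp⟩ := inv.reach v' hv'R hv'T
            exact ⟨t0, ht0, hp.lift id (fun a b hab => Finset.mem_insert_of_mem hab)⟩
        · exact inv.subT.trans (Finset.subset_insert _ _)
        · intro M hM
          by_cases hcr : u ∉ M ∧ v ∈ M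
          · have h0 : inArcs B M = ∅ := cross_empty inv (hnew M hM hcr.2 hcr.1)
            rw [inArcs, Finset.filter_insert, if_pos hcr]
            rw [inArcs] at h0
            rw [h0, Finset.card_insert_of_notMem (Finset.notMem_empty _),
              Finset.card_empty]
          · rw [inArcs, Finset.filter_insert, if_neg hcr]
            exact inv.cross M hM
      have hveq : Finset.univ \ insert v R = (Finset.univ \ R).erase v := by
        ext w
        simp only [Finset.mem_sdiff, Finset.mem_insert, Finset.mem_erase,
          Finset.mem_univ, true_and]
        tauto
      have hcard' : (Finset.univ \ insert v R).card ≤ n := by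
        rw [hveq, Finset.card_erase_of_mem (Finset.mem_sdiff.2 ⟨Finset.mem_univ v, hvR⟩)]
        omega
      exact ih (insert v R) (insert (u, v) B) hcard' inv'

end KTSPP

namespace KTSPP2
open Finset Relation KTSPP

variable {V : Type*} [Fintype V] [DecidableEq V]

lemma base (A : Finset (V × V)) (T : Finset V) (c : V × V → ℚ)
    (X : V × V → ℚ) (hX0 : ∀ a, 0 ≤ X a) (hc0 : ∀ a, 0 ≤ c a)
    (F : Finset (Finset V))
    (hlam : ∀ M ∈ F, ∀ M' ∈ F, M ⊆ M' ∨ M' ⊆ M ∨ ∀ v ∈ M, v ∉ M')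
    (hzsc : ∀ M ∈ F, ZSC A c M)
    (hreach : ∀ v : V, v ∉ T → ∃ t ∈ T, Relation.ReflTransGen (Zar A c) t v) :
    ∃ B, IsDirRootedForest A T B ∧ (∀ M ∈ F, (inArcs B M).card ≤ 1) ∧
      ∑ a ∈ B, c a ≤ ∑ a ∈ A, c a * X a := by
  have inv0 : Inv A T c F T ∅ := by
    constructor
    · exact Finset.empty_subset _
    · intro a ha; exact absurd ha (Finset.notMem_empty a)
    · intro v hv hvT; exact absurd hv hvT
    · intro v _ u; exact Finset.notMem_empty _
    · intro t _ u; exact Finset.notMem_empty _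
    · intro v hv hvT; exact absurd hv hvT
    · exact Finset.Subset.refl T
    · intro M _
      rw [inArcs, Finset.filter_empty, Finset.card_empty]
      omega
  obtain ⟨B, hforest, hcross, hzero⟩ :=
    build A T c F hlam hzsc hreach (Finset.univ \ T).card T ∅ le_rfl inv0
  refine ⟨B, hforest, hcross, ?_⟩
  rw [Finset.sum_eq_zero hzero]
  exact Finset.sum_nonneg (fun a _ => mul_nonneg (hc0 a) (hX0 a))

lemma core (A : Finset (V × V)) (hfull : ∀ u v : V, u ≠ v → (u, v) ∈ A)
    (T : Finset V) (hTne : T.Nonempty)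
    (X : V × V → ℚ) (hX0 : ∀ a, 0 ≤ X a)
    (hcut : ∀ U : Finset V, U.Nonempty → (∀ v ∈ U, v ∉ T) →
      1 ≤ ∑ a ∈ inArcs A U, X a) :
    ∀ (N : ℕ) (c : V × V → ℚ), (A.filter (fun a => 0 < c a)).card ≤ N →
      (∀ a, 0 ≤ c a) →
      ∀ F : Finset (Finset V),
        (∀ M ∈ F, ∀ M' ∈ F, M ⊆ M' ∨ M' ⊆ M ∨ ∀ v ∈ M, v ∉ M') →
        (∀ M ∈ F, ZSC A c M) →
        ∃ B, IsDirRootedForest A T B ∧ (∀ M ∈ F, (inArcs B M).card ≤ 1) ∧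
          ∑ a ∈ B, c a ≤ ∑ a ∈ A, c a * X a := by
  intro N
  induction N with
  | zero =>
    intro c hcard hc0 F hlam hzsc
    have hzeroall : ∀ a ∈ A, c a = 0 := by
      intro a ha
      have h1 : a ∉ A.filter (fun a => 0 < c a) := by
        rw [Finset.card_eq_zero.1 (Nat.le_zero.1 hcard)]
        exact Finset.notMem_empty a
      rw [Finset.mem_filter] at h1
      push_neg at h1
      exact le_antisymm (h1 ha) (hc0 a)
    apply base A T c X hX0 hc0 F hlam hzsc
    intro v hv
    obtain ⟨t0, ht0⟩ := hTne
    have ht0v : t0 ≠ v := fun h => hv (h ▸ ht0)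
    have hmem : (t0, v) ∈ A := hfull t0 v ht0v
    exact ⟨t0, ht0, Relation.ReflTransGen.single ⟨hmem, hzeroall _ hmem⟩⟩
  | succ n ih =>
    intro c hcard hc0 F hlam hzsc
    by_cases hall : ∀ v : V, v ∉ T → ∃ t ∈ T, Relation.ReflTransGen (Zar A c) t v
    · exact base A T c X hX0 hc0 F hlam hzsc hall
    · push_neg at hall
      obtain ⟨w₀, hw₀T, hw₀⟩ := hall
      classical
      set S : Finset V :=
        Finset.univ.filter
          (fun v => v ∉ T ∧ ¬ ∃ t ∈ T, Relation.ReflTransGen (Zar A c) t v)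
        with hSdef
      have memS : ∀ v, v ∈ S ↔
          v ∉ T ∧ ¬ ∃ t ∈ T, Relation.ReflTransGen (Zar A c) t v := by
        intro v; simp [hSdef]
      have hw₀S : w₀ ∈ S := by
        rw [memS]
        refine ⟨hw₀T, ?_⟩
        rintro ⟨t0, ht0, hp⟩
        exact hw₀ t0 ht0 hp
      have f1 : ∀ u v, Relation.ReflTransGen (Zar A c) u v → v ∈ S → u ∈ S := by
        intro u v huv hvS
        rw [memS] at hvS ⊢
        obtain ⟨hvT, hvR⟩ := hvS
        have hur : ¬ ∃ t ∈ T, Relation.ReflTransGen (Zar A c) t u := by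
          rintro ⟨t0, ht0, hp⟩
          exact hvR ⟨t0, ht0, hp.trans huv⟩
        have hut : u ∉ T := fun h => hur ⟨u, h, Relation.ReflTransGen.refl⟩
        exact ⟨hut, hur⟩
      set Ancf : V → Finset V :=
        fun v => Finset.univ.filter
          (fun u => u ∈ S ∧ Relation.ReflTransGen (Zar A c) u v) with hAncf
      have memAncf : ∀ u v, u ∈ Ancf v ↔
          u ∈ S ∧ Relation.ReflTransGen (Zar A c) u v := by
        intro u v; simp [hAncf]
      obtain ⟨v₀, hv₀S, hv₀min⟩ :=
        S.exists_min_image (fun v => (Ancf v).card) ⟨w₀, hw₀S⟩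
      have f3 : ∀ p, p ∈ S → Relation.ReflTransGen (Zar A c) p v₀ →
          Relation.ReflTransGen (Zar A c) v₀ p := by
        intro p hpS hpv₀
        by_contra hnot
        have hsub : Ancf p ⊂ Ancf v₀ := by
          rw [Finset.ssubset_def]
          constructor
          · intro u hu
            rw [memAncf] at hu ⊢
            exact ⟨hu.1, hu.2.trans hpv₀⟩
          · intro hsup
            have hmem : v₀ ∈ Ancf p :=
              hsup ((memAncf v₀ v₀).2 ⟨hv₀S, Relation.ReflTransGen.refl⟩)
            rw [memAncf] at hmem
            exact hnot hmem.2
        exact absurd (hv₀min p hpS) (not_le.2 (Finset.card_lt_card hsub))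
      set S₀ : Finset V :=
        Finset.univ.filter (fun u => u ∈ S ∧
          Relation.ReflTransGen (Zar A c) u v₀ ∧
          Relation.ReflTransGen (Zar A c) v₀ u) with hS₀def
      have memS₀ : ∀ u, u ∈ S₀ ↔ u ∈ S ∧
          Relation.ReflTransGen (Zar A c) u v₀ ∧
          Relation.ReflTransGen (Zar A c) v₀ u := by
        intro u; simp [hS₀def]
      have hv₀S₀ : v₀ ∈ S₀ :=
        (memS₀ v₀).2 ⟨hv₀S, Relation.ReflTransGen.refl, Relation.ReflTransGen.refl⟩
      have hS₀T : ∀ v ∈ S₀, v ∉ T := by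
        intro v hv
        exact ((memS v).1 ((memS₀ v).1 hv).1).1
      have f4 : ∀ p q, Zar A c p q → q ∈ S₀ → p ∈ S₀ := by
        intro p q hpq hq
        rw [memS₀] at hq ⊢
        obtain ⟨hqS, hqv₀, _⟩ := hq
        have hpv₀ : Relation.ReflTransGen (Zar A c) p v₀ :=
          (Relation.ReflTransGen.single hpq).trans hqv₀
        have hpS : p ∈ S := f1 p q (Relation.ReflTransGen.single hpq) hqS
        exact ⟨hpS, hpv₀, f3 p hpS hpv₀⟩
      have f6 : ∀ u v, Relation.ReflTransGen (Zar A c) u v →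
          Relation.ReflTransGen (Zar A c) v v₀ →
          Relation.ReflTransGen (Zar A c) v₀ u →
          Relation.ReflTransGen (fun a b => a ∈ S₀ ∧ b ∈ S₀ ∧ Zar A c a b) u v := by
        intro u v h
        induction h with
        | refl => intro _ _; exact Relation.ReflTransGen.refl
        | @tail w v h1 h2 ih2 =>
          intro hvv₀ hv₀u
          have hwv₀ : Relation.ReflTransGen (Zar A c) w v₀ :=
            (Relation.ReflTransGen.single h2).trans hvv₀
          have hwS : w ∈ S := f1 w v₀ hwv₀ hv₀S
          have hwS₀ : w ∈ S₀ := (memS₀ w).2 ⟨hwS, hwv₀, f3 w hwS hwv₀⟩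
          have hvS : v ∈ S := f1 v v₀ hvv₀ hv₀S
          have hvS₀ : v ∈ S₀ := (memS₀ v).2 ⟨hvS, hvv₀, f3 v hvS hvv₀⟩
          exact (ih2 hwv₀ hv₀u).tail ⟨hwS₀, hvS₀, h2⟩
      have f7 : ZSC A c S₀ := by
        intro a ha b hb
        rw [memS₀] at ha hb
        exact f6 a b (ha.2.1.trans hb.2.2) hb.2.1 ha.2.2
      have f8 : ∀ M, ZSC A c M → ∀ w ∈ M, w ∈ S₀ → ∀ u ∈ M, u ∈ S₀ := by
        intro M hM w hwM hwS₀ u huM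
        have h1' : Relation.ReflTransGen (Zar A c) u w :=
          (hM u huM w hwM).lift id (fun a b hab => hab.2.2)
        have h2' : Relation.ReflTransGen (Zar A c) w u :=
          (hM w hwM u huM).lift id (fun a b hab => hab.2.2)
        rw [memS₀] at hwS₀ ⊢
        have huv₀ : Relation.ReflTransGen (Zar A c) u v₀ := h1'.trans hwS₀.2.1
        have huS : u ∈ S := f1 u v₀ huv₀ hv₀S
        exact ⟨huS, huv₀, hwS₀.2.2.trans h2'⟩
      -- minimum entering cost
      have hne : (inArcs A S₀).Nonempty := by
        obtain ⟨t0, ht0⟩ := hTne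
        have ht0S₀ : t0 ∉ S₀ := fun h => hS₀T t0 h ht0
        have ht0v₀ : t0 ≠ v₀ := fun h => ht0S₀ (h ▸ hv₀S₀)
        refine ⟨(t0, v₀), ?_⟩
        rw [inArcs, Finset.mem_filter]
        exact ⟨hfull t0 v₀ ht0v₀, ht0S₀, hv₀S₀⟩
      obtain ⟨a₀, ha₀, hmin₀⟩ := (inArcs A S₀).exists_min_image c hne
      have ha₀' : a₀ ∈ A ∧ a₀.1 ∉ S₀ ∧ a₀.2 ∈ S₀ := by
        rw [inArcs, Finset.mem_filter] at ha₀
        exact ⟨ha₀.1, ha₀.2.1, ha₀.2.2⟩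
      set ε := c a₀ with hεdef
      have hε0 : 0 < ε := by
        rcases lt_or_eq_of_le (hc0 a₀) with h | h
        · exact h
        · exfalso
          have hz : Zar A c a₀.1 a₀.2 := by
            refine ⟨?_, ?_⟩
            · rw [Prod.mk.eta]; exact ha₀'.1
            · rw [Prod.mk.eta]; exact h.symm
          exact ha₀'.2.1 (f4 a₀.1 a₀.2 hz ha₀'.2.2)
      set c' : V × V → ℚ :=
        fun a => if a.1 ∉ S₀ ∧ a.2 ∈ S₀ then c a - ε else c a with hc'def
      have hc'le : ∀ a, c' a ≤ c a := by
        intro a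
        by_cases h : a.1 ∉ S₀ ∧ a.2 ∈ S₀ <;> simp [hc'def, h] <;> linarith
      have hc'0 : ∀ a, 0 ≤ c' a := by
        intro a
        by_cases h : a.1 ∉ S₀ ∧ a.2 ∈ S₀
        · have haA : a ∈ inArcs A S₀ := by
            rw [inArcs, Finset.mem_filter]
            refine ⟨hfull a.1 a.2 ?_, h⟩
            · intro heq
              exact h.1 (heq ▸ h.2)
          have hmin := hmin₀ a haA
          simp only [hc'def, if_pos h]
          · have : (a.1, a.2) = a := Prod.mk.eta
            linarith
        · simp only [hc'def, if_neg h]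
          exact hc0 a
      have hzar' : ∀ u v, Zar A c u v → Zar A c' u v := by
        intro u v h
        refine ⟨h.1, ?_⟩
        have hnp : ¬ ((u, v).1 ∉ S₀ ∧ (u, v).2 ∈ S₀) := by
          rintro ⟨hu, hv⟩
          exact hu (f4 u v h hv)
        simp only [hc'def, if_neg hnp]
        exact h.2
      have hzsc'f : ∀ M, ZSC A c M → ZSC A c' M := by
        intro M hM u hu v hv
        exact (hM u hu v hv).lift id (fun a b hab => ⟨hab.1, hab.2.1, hzar' a b hab.2.2⟩)
      have hposs : A.filter (fun a => 0 < c' a) ⊂ A.filter (fun a => 0 < c a) := by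
        rw [Finset.ssubset_def]
        constructor
        · intro a ha
          rw [Finset.mem_filter] at ha ⊢
          exact ⟨ha.1, lt_of_lt_of_le ha.2 (hc'le a)⟩
        · intro hsup
          have hmem1 : a₀ ∈ A.filter (fun a => 0 < c a) := by
            rw [Finset.mem_filter]; exact ⟨ha₀'.1, hε0⟩
          have hmem2 := hsup hmem1
          rw [Finset.mem_filter] at hmem2
          have hz : c' a₀ = 0 := by
            simp only [hc'def, if_pos (And.intro ha₀'.2.1 ha₀'.2.2)]
            rw [← hεdef]; ring
          rw [hz] at hmem2
          exact lt_irrefl 0 hmem2.2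
      have hcard' : (A.filter (fun a => 0 < c' a)).card ≤ n :=
        Nat.lt_succ_iff.mp (lt_of_lt_of_le (Finset.card_lt_card hposs) hcard)
      have habs : ∀ M ∈ F, (M ⊆ S₀ ∨ ∀ v ∈ M, v ∉ S₀) := by
        intro M hM
        by_cases h : ∃ w ∈ M, w ∈ S₀
        · obtain ⟨w, hwM, hwS₀⟩ := h
          exact Or.inl (fun u hu => f8 M (hzsc M hM) w hwM hwS₀ u hu)
        · push_neg at h; exact Or.inr h
      have hlam' : ∀ M ∈ insert S₀ F, ∀ M' ∈ insert S₀ F,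
          M ⊆ M' ∨ M' ⊆ M ∨ ∀ v ∈ M, v ∉ M' := by
        intro M hM M' hM'
        rcases Finset.mem_insert.1 hM with rfl | hMF
        · rcases Finset.mem_insert.1 hM' with rfl | hM'F
          · exact Or.inl (Finset.Subset.refl _)
          · rcases habs M' hM'F with h | h
            · exact Or.inr (Or.inl h)
            · exact Or.inr (Or.inr (fun v hv hv' => h v hv' hv))
        · rcases Finset.mem_insert.1 hM' with rfl | hM'F
          · rcases habs M hMF with h | h
            · exact Or.inl h
            · exact Or.inr (Or.inr h)
          · exact hlam M hMF M' hM'F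
      have hzsc' : ∀ M ∈ insert S₀ F, ZSC A c' M := by
        intro M hM
        rcases Finset.mem_insert.1 hM with rfl | hMF
        · exact hzsc'f _ f7
        · exact hzsc'f M (hzsc M hMF)
      obtain ⟨B, hforest, hcross, hcost⟩ :=
        ih c' hcard' hc'0 (insert S₀ F) hlam' hzsc'
      refine ⟨B, hforest, fun M hM => hcross M (Finset.mem_insert_of_mem hM), ?_⟩
      have hcrossS₀ : (inArcs B S₀).card ≤ 1 := hcross S₀ (Finset.mem_insert_self _ _)
      have hcut₀ : 1 ≤ ∑ a ∈ inArcs A S₀, X a := hcut S₀ ⟨v₀, hv₀S₀⟩ hS₀T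
      -- cost chain
      have e1 : ∑ a ∈ B, c a =
          ∑ a ∈ B, c' a + ((inArcs B S₀).card : ℚ) * ε := by
        have hpt : ∀ a, c a = c' a + (if a.1 ∉ S₀ ∧ a.2 ∈ S₀ then ε else 0) := by
          intro a
          by_cases h : a.1 ∉ S₀ ∧ a.2 ∈ S₀ <;> simp [hc'def, h]
        calc ∑ a ∈ B, c a
            = ∑ a ∈ B, (c' a + (if a.1 ∉ S₀ ∧ a.2 ∈ S₀ then ε else 0)) := by
              exact Finset.sum_congr rfl (fun a _ => hpt a)
          _ = ∑ a ∈ B, c' a + ∑ a ∈ B, (if a.1 ∉ S₀ ∧ a.2 ∈ S₀ then ε else 0) :=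
              Finset.sum_add_distrib
          _ = ∑ a ∈ B, c' a + ((inArcs B S₀).card : ℚ) * ε := by
              rw [← Finset.sum_filter]
              rw [show B.filter (fun a => a.1 ∉ S₀ ∧ a.2 ∈ S₀) = inArcs B S₀ from rfl]
              rw [Finset.sum_const, nsmul_eq_mul]
      have e2 : ∑ a ∈ A, c a * X a =
          ∑ a ∈ A, c' a * X a + ε * ∑ a ∈ inArcs A S₀, X a := by
        have hpt : ∀ a, c a * X a =
            c' a * X a + (if a.1 ∉ S₀ ∧ a.2 ∈ S₀ then ε * X a else 0) := by
          intro a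
          by_cases h : a.1 ∉ S₀ ∧ a.2 ∈ S₀ <;> simp [hc'def, h] <;> ring
        calc ∑ a ∈ A, c a * X a
            = ∑ a ∈ A, (c' a * X a + (if a.1 ∉ S₀ ∧ a.2 ∈ S₀ then ε * X a else 0)) :=
              Finset.sum_congr rfl (fun a _ => hpt a)
          _ = ∑ a ∈ A, c' a * X a + ∑ a ∈ A, (if a.1 ∉ S₀ ∧ a.2 ∈ S₀ then ε * X a else 0) :=
              Finset.sum_add_distrib
          _ = ∑ a ∈ A, c' a * X a + ε * ∑ a ∈ inArcs A S₀, X a := by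
              rw [← Finset.sum_filter]
              rw [show A.filter (fun a => a.1 ∉ S₀ ∧ a.2 ∈ S₀) = inArcs A S₀ from rfl]
              rw [Finset.mul_sum]
      have hcardle : ((inArcs B S₀).card : ℚ) ≤ 1 := by exact_mod_cast hcrossS₀
      have h1 : ((inArcs B S₀).card : ℚ) * ε ≤ 1 * ε :=
        mul_le_mul_of_nonneg_right hcardle hε0.le
      have h2 : ε * 1 ≤ ε * ∑ a ∈ inArcs A S₀, X a :=
        mul_le_mul_of_nonneg_left hcut₀ hε0.le
      rw [e1, e2]
      linarith
end KTSPP2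

theorem stmt_16 {V : Type*} [Fintype V] [DecidableEq V]
    (k : ℕ) (hk : 0 < k) (s t : Fin k → V)
    -- all 2k endpoints are distinct
    (hs : Function.Injective s) (ht : Function.Injective t) (hst : ∀ i j, s i ≠ t j)
    -- the arc set of the bidirected complete graph, and the terminal set T
    (A : Finset (V × V)) (hA : A = Finset.univ.filter (fun a : V × V => a.1 ≠ a.2))
    (T : Finset V) (hT : T = Finset.univ.image s ∪ Finset.univ.image t)
    -- (x, z) is feasible for LP-kTSPP
    (x : Fin k → V × V → ℚ) (z : Fin k → V → ℚ)
    (hx0 : ∀ i a, 0 ≤ x i a) (hz0 : ∀ i v, 0 ≤ z i v)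
    (hxsupp : ∀ i, ∀ a ∉ A, x i a = 0)
    (hsrc : ∀ i, ∑ a ∈ outArcs A {s i}, x i a = 1 ∧ ∑ a ∈ inArcs A {s i}, x i a = 0)
    (hsink : ∀ i, ∑ a ∈ inArcs A {t i}, x i a = 1 ∧ ∑ a ∈ outArcs A {t i}, x i a = 0)
    (hdeg : ∀ i, ∀ v : V, v ∉ T →
      ∑ a ∈ inArcs A {v}, x i a = z i v ∧ ∑ a ∈ outArcs A {v}, x i a = z i v)
    (hcut : ∀ i, ∀ v : V, v ∉ T → ∀ U : Finset V, v ∈ U → s i ∉ U →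
      z i v ≤ ∑ a ∈ inArcs A U, x i a)
    (hzsum : ∀ v : V, v ∉ T → ∑ i, z i v = 1)
    -- nonnegative arc costs
    (c : V × V → ℚ) (hc : ∀ a, 0 ≤ c a) :
    -- the aggregated flow covers every cut avoiding T ...
    (∀ U : Finset V, U.Nonempty → (∀ v ∈ U, v ∉ T) →
        1 ≤ ∑ a ∈ inArcs A U, ∑ i, x i a) ∧
    -- ... hence the min T-rooted spanning forest cost is at most the LP objective
    (∃ B : Finset (V × V), IsDirRootedForest A T B ∧
        ∑ a ∈ B, c a ≤ ∑ i, ∑ a ∈ A, c a * x i a) := by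
  have hsT : ∀ i, s i ∈ T := by
    intro i
    rw [hT]
    exact Finset.mem_union_left _ (Finset.mem_image_of_mem s (Finset.mem_univ i))
  have part1 : ∀ U : Finset V, U.Nonempty → (∀ v ∈ U, v ∉ T) →
      1 ≤ ∑ a ∈ inArcs A U, ∑ i, x i a := by
    intro U hUne hUT
    obtain ⟨v, hv⟩ := hUne
    have hvT : v ∉ T := hUT v hv
    have h1 : ∀ i, z i v ≤ ∑ a ∈ inArcs A U, x i a := fun i =>
      hcut i v hvT U hv (fun h => hUT (s i) h (hsT i))
    calc (1 : ℚ) = ∑ i, z i v := (hzsum v hvT).symm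
      _ ≤ ∑ i, ∑ a ∈ inArcs A U, x i a := Finset.sum_le_sum (fun i _ => h1 i)
      _ = ∑ a ∈ inArcs A U, ∑ i, x i a := Finset.sum_comm
  refine ⟨part1, ?_⟩
  have hfull : ∀ u v : V, u ≠ v → (u, v) ∈ A := by
    intro u v huv
    rw [hA]
    exact Finset.mem_filter.2 ⟨Finset.mem_univ _, huv⟩
  have hTne : T.Nonempty := ⟨s ⟨0, hk⟩, hsT ⟨0, hk⟩⟩
  obtain ⟨B, hforest, -, hcost⟩ := KTSPP2.core A hfull T hTne (fun a => ∑ i, x i a)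
    (fun a => Finset.sum_nonneg fun i _ => hx0 i a) part1
    (A.filter (fun a => 0 < c a)).card c le_rfl hc ∅ (by simp) (by simp)
  refine ⟨B, hforest, ?_⟩
  calc ∑ a ∈ B, c a ≤ ∑ a ∈ A, c a * ∑ i, x i a := hcost
    _ = ∑ a ∈ A, ∑ i, c a * x i a := by
        exact Finset.sum_congr rfl (fun a _ => Finset.mul_sum _ _ _)
    _ = ∑ i, ∑ a ∈ A, c a * x i a := Finset.sum_comm
end
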